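/- arXiv:2005.08371 — 7 statements merged into one kernel-verified Lean document; each statement's English description precedes it below -/
import Mathlib

section
/- Let d ≥ 1, let E = EuclideanSpace ℝ (Fin d), and let ε > 0. Suppose φ : ℝ × E → ℝ and u : ℝ × E → E are smooth (ContDiff ℝ ⊤ jointly in (t,x)) and satisfy the level-set equation ∂ₜφ(t,x) + ⟪u(t,x), ∇φ(t,x)⟫ = 0 for all (t,x), where ∇φ denotes the spatial gradient. Set η(t,x) := √(‖∇φ(t,x)‖² + ε²). Then for all (t,x): ∂ₜη(t,x) + div_x(η·u)(t,x) − η(t,x)·( div_x u(t,x) − η(t,x)⁻²·⟪∇φ(t,x), (D_x u(t,x))(∇φ(t,x))⟫ ) = 0, where D_x u is the spatial Jacobian (Fréchet derivative in x) of u and div_x denotes spatial divergence. Equivalently, ∂ₜη + ⟪u, ∇_x η⟫ + η⁻¹·⟪∇φ, (D_x u)(∇φ)⟫ = 0 pointwise. -/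
open scoped RealInnerProductSpace

noncomputable section

/-- Spatial gradient of a scalar field on Euclidean space. -/
def sgrad {d : ℕ} (f : EuclideanSpace ℝ (Fin d) → ℝ) (x : EuclideanSpace ℝ (Fin d)) :
    EuclideanSpace ℝ (Fin d) := gradient f x

/-- Divergence of a vector field on Euclidean space (trace of Jacobian). -/
def sdiv {d : ℕ} (u : EuclideanSpace ℝ (Fin d) → EuclideanSpace ℝ (Fin d))
    (x : EuclideanSpace ℝ (Fin d)) : ℝ :=
  LinearMap.trace ℝ (EuclideanSpace ℝ (Fin d)) (fderiv ℝ u x : _ →ₗ[ℝ] _)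

set_option maxHeartbeats 1000000

section Aux

variable {d : ℕ}
local notation "E'" => EuclideanSpace ℝ (Fin d)

/-- Restriction of a functional on `ℝ × E'` to the spatial factor, as a CLM. -/
def Pop (d : ℕ) : ((ℝ × E') →L[ℝ] ℝ) →L[ℝ] (E' →L[ℝ] ℝ) :=
  (ContinuousLinearMap.compL ℝ E' (ℝ × E') ℝ).flip (ContinuousLinearMap.inr ℝ ℝ E')

/-- The spatial gradient vector of a functional on `ℝ × E'`, as a CLM. -/
def Tgr (d : ℕ) : ((ℝ × E') →L[ℝ] ℝ) →L[ℝ] E' :=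
  ((InnerProductSpace.toDual ℝ E').symm.toContinuousLinearEquiv.toContinuousLinearMap).comp (Pop d)

lemma Tgr_inner (C : (ℝ × E') →L[ℝ] ℝ) (w : E') : ⟪Tgr d C, w⟫ = C (0, w) := by
  simp [Tgr, Pop, InnerProductSpace.toDual_symm_apply]

lemma sgrad_inner (f : E' → ℝ) (x v : E') : ⟪sgrad f x, v⟫ = fderiv ℝ f x v :=
  InnerProductSpace.toDual_symm_apply

lemma trace_smulRight (c : E' →ₗ[ℝ] ℝ) (v : E') :
    LinearMap.trace ℝ E' (c.smulRight v) = c v := by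
  classical
  let b := Module.Free.chooseBasis ℝ E'
  rw [LinearMap.trace_eq_matrix_trace ℝ b, Matrix.trace]
  conv_rhs => rw [← b.sum_repr v]
  simp only [Matrix.diag, LinearMap.toMatrix_apply, LinearMap.smulRight_apply, map_smul,
    Finsupp.smul_apply, smul_eq_mul, map_sum]
  exact Finset.sum_congr rfl fun i _ => by rw [mul_comm]

theorem regularized_gradnorm_evolution_aux
    (ε : ℝ) (hε : 0 < ε)
    (φ : ℝ × E' → ℝ)
    (u : ℝ × E' → E')
    (hφ : ContDiff ℝ (⊤ : ℕ∞) φ) (hu : ContDiff ℝ (⊤ : ℕ∞) u)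
    (hls : ∀ t x, deriv (fun s => φ (s, x)) t
        + ⟪u (t, x), sgrad (fun y => φ (t, y)) x⟫ = 0)
    (η : ℝ × E' → ℝ)
    (hη : ∀ t x, η (t, x) = Real.sqrt (‖sgrad (fun y => φ (t, y)) x‖ ^ 2 + ε ^ 2)) :
    ∀ t x,
      (deriv (fun s => η (s, x)) t
          + sdiv (fun y => η (t, y) • u (t, y)) x
          - η (t, x) *
              (sdiv (fun y => u (t, y)) x
                - ((η (t, x)) ^ 2)⁻¹ *
                  ⟪sgrad (fun y => φ (t, y)) x,
                    (fderiv ℝ (fun y => u (t, y)) x) (sgrad (fun y => φ (t, y)) x)⟫) = 0)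
      ∧
      (deriv (fun s => η (s, x)) t
          + ⟪u (t, x), sgrad (fun y => η (t, y)) x⟫
          + (η (t, x))⁻¹ *
              ⟪sgrad (fun y => φ (t, y)) x,
                (fderiv ℝ (fun y => u (t, y)) x) (sgrad (fun y => φ (t, y)) x)⟫ = 0) := by
  intro t x
  have hφd : Differentiable ℝ φ := hφ.differentiable (by simp)
  have hud : Differentiable ℝ u := hu.differentiable (by simp)
  set A := fderiv ℝ φ (t, x) with hAdef
  set B := fderiv ℝ (fderiv ℝ φ) (t, x) with hBdef
  set Du := fderiv ℝ u (t, x) with hDudef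
  set g : ℝ × E' → E' := fun p => Tgr d (fderiv ℝ φ p) with hgdef
  have hB' : HasFDerivAt (fderiv ℝ φ) B (t, x) :=
    ((hφ.fderiv_right (m := 1) (WithTop.coe_le_coe.mpr le_top)).differentiable one_ne_zero (t, x)).hasFDerivAt
  have hsymm : ∀ v w, B v w = B w v := hφ.contDiffAt.isSymmSndFDerivAt (by rw [minSmoothness_of_isRCLikeNormedField]; exact WithTop.coe_le_coe.mpr (le_top : (2 : ℕ∞) ≤ ⊤))
  -- identification of the spatial gradient of φ
  have hgd : ∀ (s : ℝ) (y : E'), sgrad (fun z => φ (s, z)) y = g (s, y) := by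
    intro s y
    have h : HasFDerivAt (fun z => φ (s, z))
        ((fderiv ℝ φ (s, y)).comp (ContinuousLinearMap.inr ℝ ℝ E')) y :=
      (hφd (s, y)).hasFDerivAt.comp y (hasFDerivAt_prodMk_right s y)
    show gradient _ _ = _
    rw [gradient, h.fderiv]
    simp [hgdef, Tgr, Pop]
  have hginner : ∀ w : E', ⟪g (t, x), w⟫ = A ((0 : ℝ), w) := fun w => Tgr_inner _ w
  have hg_fd : HasFDerivAt g ((Tgr d).comp B) (t, x) := (Tgr d).hasFDerivAt.comp (t, x) hB'
  -- the level-set equation in Fréchet form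
  have hls' : ∀ (s : ℝ) (y : E'),
      fderiv ℝ φ (s, y) ((1 : ℝ), (0 : E')) + (Pop d (fderiv ℝ φ (s, y))) (u (s, y)) = 0 := by
    intro s y
    have h1 : HasDerivAt (fun r => φ (r, y)) (fderiv ℝ φ (s, y) (1, 0)) s :=
      (hφd (s, y)).hasFDerivAt.comp_hasDerivAt s ((hasDerivAt_id s).prodMk (hasDerivAt_const s y))
    have h2 : ⟪u (s, y), sgrad (fun z => φ (s, z)) y⟫
        = (Pop d (fderiv ℝ φ (s, y))) (u (s, y)) := by
      rw [real_inner_comm, hgd s y]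
      simpa [Pop] using Tgr_inner (fderiv ℝ φ (s, y)) (u (s, y))
    have h := hls s y
    rw [h1.deriv, h2] at h
    exact h
  -- differentiate the level-set equation in space
  have hF1 : HasFDerivAt (fun p : ℝ × E' => fderiv ℝ φ p ((1 : ℝ), (0 : E')))
      ((ContinuousLinearMap.apply ℝ ℝ ((1 : ℝ), (0 : E'))).comp B) (t, x) :=
    (ContinuousLinearMap.apply ℝ ℝ ((1 : ℝ), (0 : E'))).hasFDerivAt.comp (t, x) hB'
  have hc : HasFDerivAt (fun p : ℝ × E' => Pop d (fderiv ℝ φ p)) ((Pop d).comp B) (t, x) :=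
    (Pop d).hasFDerivAt.comp (t, x) hB'
  have hF2 : HasFDerivAt (fun p : ℝ × E' => (Pop d (fderiv ℝ φ p)) (u p))
      ((Pop d A).comp Du + ((Pop d).comp B).flip (u (t, x))) (t, x) :=
    hc.clm_apply (hud (t, x)).hasFDerivAt
  have hsum : HasFDerivAt (fun p : ℝ × E' =>
      fderiv ℝ φ p ((1 : ℝ), (0 : E')) + (Pop d (fderiv ℝ φ p)) (u p)) _ (t, x) := hF1.add hF2
  have hzero : (fun p : ℝ × E' =>
      fderiv ℝ φ p ((1 : ℝ), (0 : E')) + (Pop d (fderiv ℝ φ p)) (u p)) = fun _ => (0 : ℝ) := by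
    funext p
    exact hls' p.1 p.2
  rw [hzero] at hsum
  have hD0 := hsum.unique (hasFDerivAt_const (0 : ℝ) (t, x))
  have hmain : ∀ w : E',
      B ((0 : ℝ), w) ((1 : ℝ), (0 : E')) + (A ((0 : ℝ), Du ((0 : ℝ), w))
        + B ((0 : ℝ), w) ((0 : ℝ), u (t, x))) = 0 := by
    intro w
    have := congrArg (fun L : (ℝ × E') →L[ℝ] ℝ => L ((0 : ℝ), w)) hD0
    simpa [Pop] using this
  -- positivity
  have hQpos : 0 < ⟪g (t, x), g (t, x)⟫ + ε ^ 2 :=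
    add_pos_of_nonneg_of_pos real_inner_self_nonneg (pow_pos hε 2)
  have hηval : ∀ (s : ℝ) (y : E'),
      η (s, y) = Real.sqrt (⟪g (s, y), g (s, y)⟫ + ε ^ 2) := by
    intro s y
    rw [hη s y, hgd s y, real_inner_self_eq_norm_sq]
  have hηpos : 0 < η (t, x) := by
    rw [hηval t x]; exact Real.sqrt_pos.2 hQpos
  have hηne : η (t, x) ≠ 0 := ne_of_gt hηpos
  -- derivative of the quadratic form
  set Dq := (fderivInnerCLM ℝ (g (t, x), g (t, x))).comp
      (((Tgr d).comp B).prod ((Tgr d).comp B)) with hDqdef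
  have hq_fd : HasFDerivAt (fun p : ℝ × E' => ⟪g p, g p⟫ + ε ^ 2) Dq (t, x) :=
    (hg_fd.inner ℝ hg_fd).add_const _
  have hDq_eval : ∀ v : ℝ × E', Dq v = 2 * B v ((0 : ℝ), g (t, x)) := by
    intro v
    rw [hDqdef]
    simp only [ContinuousLinearMap.coe_comp', Function.comp_apply,
      ContinuousLinearMap.prod_apply, fderivInnerCLM_apply]
    rw [real_inner_comm (g (t, x)), Tgr_inner]
    have h1 : A ((0 : ℝ), Tgr d (B v)) = B v ((0 : ℝ), g (t, x)) := by
      rw [← Tgr_inner A (Tgr d (B v)), real_inner_comm, Tgr_inner]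
    rw [h1]
    ring
  -- time derivative of η
  have hq_t : HasDerivAt (fun s => ⟪g (s, x), g (s, x)⟫ + ε ^ 2) (Dq (1, 0)) t :=
    by have := hq_fd.comp_hasDerivAt t ((hasDerivAt_id t).prodMk (hasDerivAt_const t x)); exact this
  have hdt : deriv (fun s => η (s, x)) t = Dq ((1 : ℝ), (0 : E')) / (2 * η (t, x)) := by
    have heq : (fun s => η (s, x)) = fun s => Real.sqrt (⟪g (s, x), g (s, x)⟫ + ε ^ 2) :=
      funext fun s => hηval s x
    rw [heq, (hq_t.sqrt (ne_of_gt hQpos)).deriv, hηval t x]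
  -- spatial derivative of η
  have hq_x : HasFDerivAt (fun y => ⟪g (t, y), g (t, y)⟫ + ε ^ 2)
      (Dq.comp (ContinuousLinearMap.inr ℝ ℝ E')) x :=
    hq_fd.comp x (hasFDerivAt_prodMk_right t x)
  have hηx : HasFDerivAt (fun y => η (t, y))
      ((1 / (2 * Real.sqrt (⟪g (t, x), g (t, x)⟫ + ε ^ 2))) •
        (Dq.comp (ContinuousLinearMap.inr ℝ ℝ E'))) x := by
    have heq : (fun y => η (t, y)) = fun y => Real.sqrt (⟪g (t, y), g (t, y)⟫ + ε ^ 2) :=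
      funext fun y => hηval t y
    rw [heq]
    exact hq_x.sqrt (ne_of_gt hQpos)
  have hgradeta : ⟪u (t, x), sgrad (fun y => η (t, y)) x⟫
      = Dq ((0 : ℝ), u (t, x)) / (2 * η (t, x)) := by
    rw [real_inner_comm, sgrad_inner, hηx.fderiv, hηval t x]
    simp only [ContinuousLinearMap.coe_smul', Pi.smul_apply, ContinuousLinearMap.coe_comp',
      Function.comp_apply, ContinuousLinearMap.inr_apply, smul_eq_mul]
    ring
  -- spatial Jacobian of u
  have hux : HasFDerivAt (fun y => u (t, y)) (Du.comp (ContinuousLinearMap.inr ℝ ℝ E')) x :=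
    (hud (t, x)).hasFDerivAt.comp x (hasFDerivAt_prodMk_right t x)
  have hX : ⟪sgrad (fun y => φ (t, y)) x,
      (fderiv ℝ (fun y => u (t, y)) x) (sgrad (fun y => φ (t, y)) x)⟫
      = A ((0 : ℝ), Du ((0 : ℝ), g (t, x))) := by
    rw [hgd t x, hux.fderiv, ← hginner]
    simp
  -- part 2
  have hpart2 : deriv (fun s => η (s, x)) t
      + ⟪u (t, x), sgrad (fun y => η (t, y)) x⟫
      + (η (t, x))⁻¹ *
          ⟪sgrad (fun y => φ (t, y)) x,
            (fderiv ℝ (fun y => u (t, y)) x) (sgrad (fun y => φ (t, y)) x)⟫ = 0 := by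
    rw [hdt, hgradeta, hX, hDq_eval, hDq_eval,
      hsymm ((1 : ℝ), (0 : E')) ((0 : ℝ), g (t, x)),
      hsymm ((0 : ℝ), u (t, x)) ((0 : ℝ), g (t, x))]
    have hmg := hmain (g (t, x))
    have key : (B ((0 : ℝ), g (t, x))) ((1 : ℝ), (0 : _root_.EuclideanSpace ℝ (Fin d)))
        + (B ((0 : ℝ), g (t, x))) ((0 : ℝ), u (t, x))
        + A ((0 : ℝ), Du ((0 : ℝ), g (t, x))) = 0 := by linarith
    field_simp
    linear_combination key
  refine ⟨?_, hpart2⟩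
  -- divergence product rule
  have hsm : HasFDerivAt (fun y => η (t, y) • u (t, y))
      (η (t, x) • (Du.comp (ContinuousLinearMap.inr ℝ ℝ E'))
        + ((1 / (2 * Real.sqrt (⟪g (t, x), g (t, x)⟫ + ε ^ 2))) •
            (Dq.comp (ContinuousLinearMap.inr ℝ ℝ E'))).smulRight (u (t, x))) x :=
    hηx.smul hux
  have hdiv : sdiv (fun y => η (t, y) • u (t, y)) x
      = η (t, x) * sdiv (fun y => u (t, y)) x + Dq ((0 : ℝ), u (t, x)) / (2 * η (t, x)) := by
    rw [sdiv, hsm.fderiv, sdiv, hux.fderiv]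
    have hcoe : ((η (t, x) • (Du.comp (ContinuousLinearMap.inr ℝ ℝ E'))
        + ((1 / (2 * Real.sqrt (⟪g (t, x), g (t, x)⟫ + ε ^ 2))) •
            (Dq.comp (ContinuousLinearMap.inr ℝ ℝ E'))).smulRight (u (t, x)) :
          E' →L[ℝ] E') : E' →ₗ[ℝ] E')
        = η (t, x) • ((Du.comp (ContinuousLinearMap.inr ℝ ℝ E') : E' →L[ℝ] E') : E' →ₗ[ℝ] E')
          + (((1 / (2 * Real.sqrt (⟪g (t, x), g (t, x)⟫ + ε ^ 2))) •
              (Dq.comp (ContinuousLinearMap.inr ℝ ℝ E')) : E' →L[ℝ] ℝ) :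
                E' →ₗ[ℝ] ℝ).smulRight (u (t, x)) := rfl
    rw [hcoe, map_add, map_smul, trace_smulRight]
    simp only [ContinuousLinearMap.coe_coe, ContinuousLinearMap.coe_smul',
      Pi.smul_apply, ContinuousLinearMap.coe_comp',
      Function.comp_apply, ContinuousLinearMap.inr_apply, smul_eq_mul]
    rw [← hηval t x]
    ring
  rw [hdiv, hdt, hX]
  rw [hdt, hgradeta, hX] at hpart2
  have hsq : η (t, x) * ((η (t, x)) ^ 2)⁻¹ = (η (t, x))⁻¹ := by
    rw [sq, mul_inv, ← mul_assoc, mul_inv_cancel₀ hηne, one_mul]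
  linear_combination hpart2 + A ((0 : ℝ), Du ((0 : ℝ), g (t, x))) * hsq

end Aux

/-- Lemma 3.1: evolution of the regularized gradient norm `η = √(‖∇φ‖² + ε²)`
under pure convection of the level-set function. -/
theorem regularized_gradnorm_evolution
    (d : ℕ) (hd : 1 ≤ d) (ε : ℝ) (hε : 0 < ε)
    (φ : ℝ × EuclideanSpace ℝ (Fin d) → ℝ)
    (u : ℝ × EuclideanSpace ℝ (Fin d) → EuclideanSpace ℝ (Fin d))
    (hφ : ContDiff ℝ (⊤ : ℕ∞) φ) (hu : ContDiff ℝ (⊤ : ℕ∞) u)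
    (hls : ∀ t x, deriv (fun s => φ (s, x)) t
        + ⟪u (t, x), sgrad (fun y => φ (t, y)) x⟫ = 0)
    (η : ℝ × EuclideanSpace ℝ (Fin d) → ℝ)
    (hη : ∀ t x, η (t, x) = Real.sqrt (‖sgrad (fun y => φ (t, y)) x‖ ^ 2 + ε ^ 2)) :
    ∀ t x,
      (deriv (fun s => η (s, x)) t
          + sdiv (fun y => η (t, y) • u (t, y)) x
          - η (t, x) *
              (sdiv (fun y => u (t, y)) x
                - ((η (t, x)) ^ 2)⁻¹ *
                  ⟪sgrad (fun y => φ (t, y)) x,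
                    (fderiv ℝ (fun y => u (t, y)) x) (sgrad (fun y => φ (t, y)) x)⟫) = 0)
      ∧
      (deriv (fun s => η (s, x)) t
          + ⟪u (t, x), sgrad (fun y => η (t, y)) x⟫
          + (η (t, x))⁻¹ *
              ⟪sgrad (fun y => φ (t, y)) x,
                (fderiv ℝ (fun y => u (t, y)) x) (sgrad (fun y => φ (t, y)) x)⟫ = 0) := by
  exact regularized_gradnorm_evolution_aux ε hε φ u hφ hu hls η hη
end
end

section
/- Let d ≥ 1, E = EuclideanSpace ℝ (Fin d), ε > 0. Suppose φ : ℝ × E → ℝ and u : ℝ × E → E are smooth and satisfy ∂ₜφ + ⟪u, ∇φ⟫ = 0 everywhere, and let δ : ℝ → ℝ be smooth (a regularized Dirac function). Set η(t,x) := √(‖∇φ(t,x)‖² + ε²) and δ_Γ(t,x) := δ(φ(t,x))·η(t,x). Then for all (t,x): ∂ₜδ_Γ(t,x) + div_x(δ_Γ·u)(t,x) − δ_Γ(t,x)·( div_x u(t,x) − η(t,x)⁻²·⟪∇φ(t,x), (D_x u(t,x))(∇φ(t,x))⟫ ) = 0. -/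
open scoped RealInnerProductSpace

noncomputable section

lemma trace_smulRight_aux {d : ℕ} (f : EuclideanSpace ℝ (Fin d) →L[ℝ] ℝ)
    (v : EuclideanSpace ℝ (Fin d)) :
    LinearMap.trace ℝ (EuclideanSpace ℝ (Fin d))
      ((f.smulRight v : EuclideanSpace ℝ (Fin d) →L[ℝ] EuclideanSpace ℝ (Fin d)) :
        _ →ₗ[ℝ] _) = f v := by
  classical
  set b := (EuclideanSpace.basisFun (Fin d) ℝ).toBasis
  rw [LinearMap.trace_eq_matrix_trace ℝ b, Matrix.trace]
  have hdiag : ∀ i, (LinearMap.toMatrix b b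
      ((f.smulRight v : EuclideanSpace ℝ (Fin d) →L[ℝ] EuclideanSpace ℝ (Fin d)) :
        _ →ₗ[ℝ] _)).diag i = f (b i) * v i := by
    intro i
    simp [Matrix.diag, LinearMap.toMatrix_apply, b, EuclideanSpace.basisFun_repr]
  rw [Finset.sum_congr rfl (fun i _ => hdiag i)]
  conv_rhs => rw [← b.sum_repr v]
  simp [b, EuclideanSpace.basisFun_repr, mul_comm]

section Aux

variable {d : ℕ}

local notation "E" => EuclideanSpace ℝ (Fin d)

/-- The continuous linear map sending a space-time covector to the Riesz representative of
its spatial part. -/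
def spatialRiesz (d : ℕ) : ((ℝ × E) →L[ℝ] ℝ) →L[ℝ] E :=
  ContinuousLinearMap.mk
    { toFun := fun S => (InnerProductSpace.toDual ℝ E).symm
        (S.comp (ContinuousLinearMap.inr ℝ ℝ E))
      map_add' := by
        intro S1 S2
        simp [ContinuousLinearMap.add_comp]
      map_smul' := by
        intro c S
        simp [ContinuousLinearMap.smul_comp] }
    ((InnerProductSpace.toDual ℝ E).symm.continuous.comp
      (((ContinuousLinearMap.compL ℝ E (ℝ × E) ℝ).flip
        (ContinuousLinearMap.inr ℝ ℝ E)).continuous))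

lemma spatialRiesz_inner (S : (ℝ × E) →L[ℝ] ℝ) (w : E) :
    ⟪spatialRiesz d S, w⟫ = S (0, w) := by
  simp [spatialRiesz, InnerProductSpace.toDual_symm_apply]

end Aux


set_option maxHeartbeats 1000000 in
/-- Lemma 3.2: evolution of the regularized surface Dirac `δ_Γ = δ(φ)·η`,
`η = √(‖∇φ‖² + ε²)`, under pure convection of the level-set function. -/
theorem regularized_surface_dirac_evolution
    (d : ℕ) (hd : 1 ≤ d) (ε : ℝ) (hε : 0 < ε)
    (φ : ℝ × EuclideanSpace ℝ (Fin d) → ℝ)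
    (u : ℝ × EuclideanSpace ℝ (Fin d) → EuclideanSpace ℝ (Fin d))
    (δ : ℝ → ℝ)
    (hφ : ContDiff ℝ (⊤ : ℕ∞) φ) (hu : ContDiff ℝ (⊤ : ℕ∞) u) (hδ : ContDiff ℝ (⊤ : ℕ∞) δ)
    (hls : ∀ t x, deriv (fun s => φ (s, x)) t
        + ⟪u (t, x), sgrad (fun y => φ (t, y)) x⟫ = 0)
    (η : ℝ × EuclideanSpace ℝ (Fin d) → ℝ)
    (hη : ∀ t x, η (t, x) = Real.sqrt (‖sgrad (fun y => φ (t, y)) x‖ ^ 2 + ε ^ 2))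
    (δΓ : ℝ × EuclideanSpace ℝ (Fin d) → ℝ)
    (hδΓ : ∀ t x, δΓ (t, x) = δ (φ (t, x)) * η (t, x)) :
    ∀ t x,
      deriv (fun s => δΓ (s, x)) t
        + sdiv (fun y => δΓ (t, y) • u (t, y)) x
        - δΓ (t, x) *
            (sdiv (fun y => u (t, y)) x
              - ((η (t, x)) ^ 2)⁻¹ *
                ⟪sgrad (fun y => φ (t, y)) x,
                  (fderiv ℝ (fun y => u (t, y)) x) (sgrad (fun y => φ (t, y)) x)⟫) = 0 := by
  classical
  -- abbreviations
  set T := spatialRiesz d with hTdef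
  set J : EuclideanSpace ℝ (Fin d) →L[ℝ] ℝ × EuclideanSpace ℝ (Fin d) :=
    ContinuousLinearMap.inr ℝ ℝ (EuclideanSpace ℝ (Fin d)) with hJdef
  -- differentiability basics
  have hφd : Differentiable ℝ φ := hφ.differentiable (by simp)
  have hud : Differentiable ℝ u := hu.differentiable (by simp)
  have hδd : Differentiable ℝ δ := hδ.differentiable (by simp)
  have hA : ContDiff ℝ (⊤ : ℕ∞) (fderiv ℝ φ) := hφ.fderiv_right (by simp)
  have hAd : Differentiable ℝ (fderiv ℝ φ) := hA.differentiable (by simp)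
  -- the spatial gradient as a function on space-time
  set g : ℝ × EuclideanSpace ℝ (Fin d) → EuclideanSpace ℝ (Fin d) :=
    fun p => T (fderiv ℝ φ p) with hgdef
  have hginner : ∀ p (w : EuclideanSpace ℝ (Fin d)), ⟪g p, w⟫ = fderiv ℝ φ p (0, w) :=
    fun p w => spatialRiesz_inner _ w
  -- fderiv of slices
  have hsliceφ : ∀ t x, fderiv ℝ (fun y => φ (t, y)) x = (fderiv ℝ φ (t, x)).comp J :=
    fun t x => ((hφd (t, x)).hasFDerivAt.comp x (hasFDerivAt_prodMk_right t x)).fderiv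
  have hsgrad : ∀ t x, sgrad (fun y => φ (t, y)) x = g (t, x) := by
    intro t x
    rw [sgrad, gradient, hsliceφ]
    rfl
  have hderivφ : ∀ t x, deriv (fun s => φ (s, x)) t = fderiv ℝ φ (t, x) (1, 0) := by
    intro t x
    have h1 := (hφd (t, x)).hasFDerivAt.comp_hasDerivAt t
      (hasFDerivAt_prodMk_left t x).hasDerivAt
    simpa [Function.comp_def] using h1.deriv
  -- derivative of g
  set A2 := fderiv ℝ (fderiv ℝ φ) with hA2def
  set B : ℝ × EuclideanSpace ℝ (Fin d) →
      (ℝ × EuclideanSpace ℝ (Fin d)) →L[ℝ] EuclideanSpace ℝ (Fin d) :=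
    fun p => T.comp (A2 p) with hBdef
  have hBg : ∀ p, HasFDerivAt g (B p) p :=
    fun p => T.hasFDerivAt.comp p (hAd p).hasFDerivAt
  have hBinner : ∀ p q (w : EuclideanSpace ℝ (Fin d)), ⟪B p q, w⟫ = A2 p q (0, w) :=
    fun p q w => spatialRiesz_inner _ w
  -- the squared regularized norm
  set N : ℝ × EuclideanSpace ℝ (Fin d) → ℝ := fun p => ⟪g p, g p⟫ + ε ^ 2 with hNdef
  have hNpos : ∀ p, 0 < N p := by
    intro p
    have : ⟪g p, g p⟫ = ‖g p‖ ^ 2 := real_inner_self_eq_norm_sq (g p)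
    rw [hNdef]; dsimp only; rw [this]; positivity
  set CN : ℝ × EuclideanSpace ℝ (Fin d) →
      (ℝ × EuclideanSpace ℝ (Fin d)) →L[ℝ] ℝ :=
    fun p => (fderivInnerCLM ℝ (g p, g p)).comp ((B p).prod (B p)) with hCNdef
  have hN : ∀ p, HasFDerivAt N (CN p) p :=
    fun p => ((hBg p).inner ℝ (hBg p)).add_const (ε ^ 2)
  have hCNval : ∀ p q, CN p q = ⟪g p, B p q⟫ + ⟪B p q, g p⟫ := by
    intro p q
    simp [hCNdef, fderivInnerCLM_apply]
  -- δΓ as a globally defined function F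
  set F : ℝ × EuclideanSpace ℝ (Fin d) → ℝ := fun p => δ (φ p) * Real.sqrt (N p) with hFdef
  have hδΓF : δΓ = F := by
    funext p
    obtain ⟨t, x⟩ := p
    rw [hδΓ, hη, hsgrad, hFdef]
    dsimp only
    rw [hNdef]
    dsimp only
    rw [real_inner_self_eq_norm_sq]
  -- derivative of F
  set L : ℝ × EuclideanSpace ℝ (Fin d) →
      (ℝ × EuclideanSpace ℝ (Fin d)) →L[ℝ] ℝ :=
    fun p => δ (φ p) • ((1 / (2 * Real.sqrt (N p))) • CN p)
      + Real.sqrt (N p) • ((deriv δ (φ p)) • fderiv ℝ φ p) with hLdef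
  have hδφ : ∀ p, HasFDerivAt (fun p => δ (φ p)) ((deriv δ (φ p)) • fderiv ℝ φ p) p :=
    fun p => (hδd (φ p)).hasDerivAt.comp_hasFDerivAt p (hφd p).hasFDerivAt
  have hsqrtN : ∀ p, HasFDerivAt (fun p => Real.sqrt (N p))
      ((1 / (2 * Real.sqrt (N p))) • CN p) p :=
    fun p => (hN p).sqrt (hNpos p).ne'
  have hF : ∀ p, HasFDerivAt F (L p) p := fun p => (hδφ p).mul (hsqrtN p)
  have hLval : ∀ p q, L p q = δ (φ p) * ((1 / (2 * Real.sqrt (N p)))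
      * (2 * ⟪g p, B p q⟫))
      + Real.sqrt (N p) * (deriv δ (φ p) * fderiv ℝ φ p q) := by
    intro p q
    rw [hLdef]
    simp only [ContinuousLinearMap.add_apply, ContinuousLinearMap.smul_apply, smul_eq_mul]
    rw [hCNval, real_inner_comm (B p q) (g p)]
    ring
  -- now fix the point
  intro t x
  -- (1) time derivative of δΓ
  have h1 : deriv (fun s => δΓ (s, x)) t = L (t, x) (1, 0) := by
    rw [hδΓF]
    have := (hF (t, x)).comp_hasDerivAt t (hasFDerivAt_prodMk_left t x).hasDerivAt
    simpa [Function.comp_def] using this.deriv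
  -- (2) the divergence term
  have husl : HasFDerivAt (fun y => u (t, y)) ((fderiv ℝ u (t, x)).comp J) x :=
    (hud (t, x)).hasFDerivAt.comp x (hasFDerivAt_prodMk_right t x)
  have hDu_eq : fderiv ℝ (fun y => u (t, y)) x = (fderiv ℝ u (t, x)).comp J := husl.fderiv
  have hFsl : HasFDerivAt (fun y => F (t, y)) ((L (t, x)).comp J) x :=
    (hF (t, x)).comp x (hasFDerivAt_prodMk_right t x)
  have h2 : sdiv (fun y => δΓ (t, y) • u (t, y)) x
      = F (t, x) * sdiv (fun y => u (t, y)) x + L (t, x) (0, u (t, x)) := by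
    rw [hδΓF, sdiv, HasFDerivAt.fderiv (f := fun y => F (t, y) • u (t, y)) (hFsl.smul husl), sdiv, hDu_eq]
    simp only [ContinuousLinearMap.coe_add, ContinuousLinearMap.coe_smul, map_add, map_smul,
      trace_smulRight_aux, smul_eq_mul]
    simp [hJdef]
  -- (3) the key pointwise identities
  have hls' : fderiv ℝ φ (t, x) (1, u (t, x)) = 0 := by
    have h0 := hls t x
    rw [hderivφ, hsgrad, real_inner_comm, hginner] at h0
    have : ((1 : ℝ), u (t, x)) = ((1 : ℝ), (0 : EuclideanSpace ℝ (Fin d)))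
        + ((0 : ℝ), u (t, x)) := by simp
    rw [this, map_add]
    linarith
  -- symmetry of the second derivative
  have hsym : ∀ q r, A2 (t, x) q r = A2 (t, x) r q := by
    intro q r
    exact (hφ.contDiffAt.isSymmSndFDerivAt (by rw [minSmoothness_of_isRCLikeNormedField]; exact WithTop.coe_le_coe.mpr le_top)).eq q r
  -- differentiated level-set equation
  have hkey : ⟪g (t, x), B (t, x) (1, u (t, x))⟫
      = - ⟪g (t, x), (fderiv ℝ u (t, x)) (0, g (t, x))⟫ := by
    set ev : ((ℝ × EuclideanSpace ℝ (Fin d)) →L[ℝ] ℝ) →L[ℝ] ℝ :=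
      ContinuousLinearMap.apply ℝ ℝ ((1 : ℝ), (0 : EuclideanSpace ℝ (Fin d))) with hevdef
    set h : ℝ × EuclideanSpace ℝ (Fin d) → ℝ :=
      fun p => ev (fderiv ℝ φ p) + ⟪u p, g p⟫ with hhdef
    have hzero : h = fun _ => 0 := by
      funext p
      obtain ⟨s, y⟩ := p
      have h0 := hls s y
      rw [hderivφ, hsgrad] at h0
      simpa [hhdef, hevdef] using h0
    set Ch : (ℝ × EuclideanSpace ℝ (Fin d)) →L[ℝ] ℝ :=
      ev.comp (A2 (t, x)) + (fderivInnerCLM ℝ (u (t, x), g (t, x))).comp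
        ((fderiv ℝ u (t, x)).prod (B (t, x))) with hChdef
    have hCh : HasFDerivAt h Ch (t, x) := by
      exact (ev.hasFDerivAt.comp (t, x) (hAd (t, x)).hasFDerivAt).add
        (((hud (t, x)).hasFDerivAt.inner ℝ (hBg (t, x))))
    have hCh0 : Ch = 0 := by
      have := hCh.fderiv
      rw [hzero] at this
      rw [← this, fderiv_const_apply]
    have hq := congrFun (congrArg (fun (S : (ℝ × EuclideanSpace ℝ (Fin d)) →L[ℝ] ℝ) =>
      (S : ℝ × EuclideanSpace ℝ (Fin d) → ℝ)) hCh0) (0, g (t, x))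
    rw [hChdef] at hq
    simp only [ContinuousLinearMap.add_apply, ContinuousLinearMap.comp_apply,
      ContinuousLinearMap.prod_apply, fderivInnerCLM_apply, ContinuousLinearMap.zero_apply,
      ContinuousLinearMap.apply_apply, hevdef] at hq
    -- hq : A2 (0,g) (1,0) + (⟪u, B (0,g)⟫ + ⟪Du (0,g), g⟫) = 0
    have e1 : ⟪u (t, x), B (t, x) (0, g (t, x))⟫ = A2 (t, x) (0, g (t, x)) (0, u (t, x)) := by
      rw [real_inner_comm, hBinner]
    have e2 : ⟪g (t, x), B (t, x) (1, u (t, x))⟫ = A2 (t, x) (0, g (t, x)) (1, u (t, x)) := by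
      rw [real_inner_comm, hBinner, hsym]
    have e3 : A2 (t, x) (0, g (t, x)) (1, u (t, x))
        = A2 (t, x) (0, g (t, x)) (1, 0) + A2 (t, x) (0, g (t, x)) (0, u (t, x)) := by
      have : ((1 : ℝ), u (t, x)) = ((1 : ℝ), (0 : EuclideanSpace ℝ (Fin d)))
          + ((0 : ℝ), u (t, x)) := by simp
      rw [this, map_add]
    have e4 : ⟪fderiv ℝ u (t, x) (0, g (t, x)), g (t, x)⟫
        = ⟪g (t, x), (fderiv ℝ u (t, x)) (0, g (t, x))⟫ := real_inner_comm _ _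
    rw [e2, e3, ← e1, ← e4]
    linarith
  -- (4) assemble
  rw [h1, h2, hδΓF, hsgrad, hη, hsgrad]
  have hNval : ‖g (t, x)‖ ^ 2 + ε ^ 2 = N (t, x) := by
    rw [hNdef]; dsimp only; rw [real_inner_self_eq_norm_sq]
  rw [hNval, hDu_eq]
  have hsq : Real.sqrt (N (t, x)) ^ 2 = N (t, x) := Real.sq_sqrt (hNpos (t, x)).le
  rw [hsq]
  have hJg : (fderiv ℝ u (t, x)).comp J (g (t, x)) = fderiv ℝ u (t, x) (0, g (t, x)) := by
    simp [hJdef]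
  rw [hJg]
  -- combine the two L-terms
  have hsum : L (t, x) (1, 0) + L (t, x) (0, u (t, x)) = L (t, x) (1, u (t, x)) := by
    rw [← map_add]
    congr 1
    simp
  set c : ℝ := ⟪g (t, x), (fderiv ℝ u (t, x)) (0, g (t, x))⟫ with hcdef
  set sN : ℝ := Real.sqrt (N (t, x)) with hsNdef
  have hsN : sN ≠ 0 := (Real.sqrt_pos.mpr (hNpos (t, x))).ne'
  have hN0 : N (t, x) ≠ 0 := (hNpos (t, x)).ne'
  have hsq' : sN * sN = N (t, x) := Real.mul_self_sqrt (hNpos (t, x)).le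
  have hLfin : L (t, x) (1, u (t, x)) = -(δ (φ (t, x)) * sN⁻¹ * c) := by
    rw [hLval, hls', hkey, ← hsNdef]
    field_simp
    ring
  have hsum2 : L (t, x) (1, 0) + L (t, x) (0, u (t, x)) = -(δ (φ (t, x)) * sN⁻¹ * c) :=
    hsum.trans hLfin
  have hFval : F (t, x) = δ (φ (t, x)) * sN := by simp only [hFdef, hsNdef]
  have key2 : F (t, x) * (N (t, x))⁻¹ = δ (φ (t, x)) * sN⁻¹ := by
    rw [hFval, ← hsq', mul_inv]
    field_simp
  have hrearr : L (t, x) (1, 0)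
      + (F (t, x) * sdiv (fun y => u (t, y)) x + L (t, x) (0, u (t, x)))
      - F (t, x) * (sdiv (fun y => u (t, y)) x - (N (t, x))⁻¹ * c)
      = (L (t, x) (1, 0) + L (t, x) (0, u (t, x))) + (F (t, x) * (N (t, x))⁻¹) * c := by
    ring
  rw [hrearr, hsum2, key2]
  ring
end
end

section
/- Let d ≥ 1, E = EuclideanSpace ℝ (Fin d), ε > 0, let φ : E → ℝ and δ : ℝ → ℝ be smooth. Define η(x) := √(‖∇φ(x)‖² + ε²), ν(x) := ∇φ(x)/η(x), δ_Γ(x) := δ(φ(x))·η(x), κ(x) := div ν(x), and the tangential projection P_T(x) : E → E, P_T(x)b := b − ⟪ν(x), b⟫·ν(x). Then for every vector e ∈ E and every x ∈ E, the divergence of the vector field x' ↦ δ_Γ(x')·(P_T(x') e) satisfies: div( δ_Γ · P_T e )(x) = −δ_Γ(x)·κ(x)·⟪ν(x), e⟫ + ε²·δ'(φ(x))·⟪ν(x), e⟫. (Equivalently, −∇·(P_T δ_Γ) = δ_Γ κ ν − ε² δ'(φ) ν componentwise.) -/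
open scoped RealInnerProductSpace

noncomputable section

lemma trace_smulRight' {d : ℕ} (ℓ : EuclideanSpace ℝ (Fin d) →L[ℝ] ℝ)
    (v : EuclideanSpace ℝ (Fin d)) :
    LinearMap.trace ℝ (EuclideanSpace ℝ (Fin d)) ((ℓ.smulRight v) : _ →ₗ[ℝ] _) = ℓ v := by
  classical
  set b := (EuclideanSpace.basisFun (Fin d) ℝ).toBasis
  rw [LinearMap.trace_eq_matrix_trace ℝ b, Matrix.trace]
  have hdiag : ∀ i, Matrix.diag (LinearMap.toMatrix b b (ℓ.smulRight v : _ →ₗ[ℝ] _)) i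
      = ℓ (b i) * b.repr v i := by
    intro i
    simp [Matrix.diag, LinearMap.toMatrix_apply, mul_comm]
  rw [Finset.sum_congr rfl fun i _ => hdiag i]
  calc ∑ i, ℓ (b i) * b.repr v i = ℓ (∑ i, b.repr v i • b i) := by
        rw [map_sum]; simp [mul_comm]
    _ = ℓ v := by rw [b.sum_repr v]

lemma sdiv_congr' {d : ℕ} {u v : EuclideanSpace ℝ (Fin d) → EuclideanSpace ℝ (Fin d)}
    (x : EuclideanSpace ℝ (Fin d)) (h : ∀ y, u y = v y) : sdiv u x = sdiv v x := by
  have : u = v := funext h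
  rw [this]

lemma sdiv_sub' {d : ℕ} {u v : EuclideanSpace ℝ (Fin d) → EuclideanSpace ℝ (Fin d)}
    {x : EuclideanSpace ℝ (Fin d)} (hu : DifferentiableAt ℝ u x)
    (hv : DifferentiableAt ℝ v x) :
    sdiv (fun y => u y - v y) x = sdiv u x - sdiv v x := by
  unfold sdiv
  rw [fderiv_fun_sub hu hv]
  simp

lemma sdiv_smul' {d : ℕ} {f : EuclideanSpace ℝ (Fin d) → ℝ}
    {v : EuclideanSpace ℝ (Fin d) → EuclideanSpace ℝ (Fin d)}
    {x : EuclideanSpace ℝ (Fin d)} (hf : DifferentiableAt ℝ f x)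
    (hv : DifferentiableAt ℝ v x) :
    sdiv (fun y => f y • v y) x = fderiv ℝ f x (v x) + f x * sdiv v x := by
  unfold sdiv
  rw [fderiv_fun_smul hf hv]
  simp only [ContinuousLinearMap.coe_add, ContinuousLinearMap.coe_smul, map_add, map_smul,
    trace_smulRight', smul_eq_mul]
  ring

lemma sdiv_smul_const' {d : ℕ} {f : EuclideanSpace ℝ (Fin d) → ℝ}
    {x : EuclideanSpace ℝ (Fin d)} (hf : DifferentiableAt ℝ f x)
    (e : EuclideanSpace ℝ (Fin d)) :
    sdiv (fun y => f y • e) x = fderiv ℝ f x e := by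
  unfold sdiv
  rw [fderiv_smul_const hf]
  simp [trace_smulRight']

/-- Proposition 3.3 (= Proposition B.1): the divergence identity
`∇·(P_T δ_Γ) = −δ_Γ κ ν + ε² δ'(φ) ν`, componentwise against any vector `e`. -/
theorem div_tangential_projection_surface_dirac
    (d : ℕ) (hd : 1 ≤ d) (ε : ℝ) (hε : 0 < ε)
    (φ : EuclideanSpace ℝ (Fin d) → ℝ) (δ : ℝ → ℝ)
    (hφ : ContDiff ℝ (⊤ : ℕ∞) φ) (hδ : ContDiff ℝ (⊤ : ℕ∞) δ)
    (η : EuclideanSpace ℝ (Fin d) → ℝ)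
    (hη : ∀ x, η x = Real.sqrt (‖sgrad φ x‖ ^ 2 + ε ^ 2))
    (ν : EuclideanSpace ℝ (Fin d) → EuclideanSpace ℝ (Fin d))
    (hν : ∀ x, ν x = (η x)⁻¹ • sgrad φ x)
    (δΓ : EuclideanSpace ℝ (Fin d) → ℝ)
    (hδΓ : ∀ x, δΓ x = δ (φ x) * η x)
    (κ : EuclideanSpace ℝ (Fin d) → ℝ)
    (hκ : ∀ x, κ x = sdiv ν x)
    (P_T : EuclideanSpace ℝ (Fin d) → EuclideanSpace ℝ (Fin d) → EuclideanSpace ℝ (Fin d))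
    (hPT : ∀ x b, P_T x b = b - ⟪ν x, b⟫ • ν x) :
    ∀ (e : EuclideanSpace ℝ (Fin d)) (x : EuclideanSpace ℝ (Fin d)),
      sdiv (fun y => δΓ y • P_T y e) x
        = -(δΓ x * κ x * ⟪ν x, e⟫) + ε ^ 2 * deriv δ (φ x) * ⟪ν x, e⟫ := by
  intro e x
  -- basic smoothness of φ and its gradient
  have hf'c : ContDiff ℝ 1 (fderiv ℝ φ) := hφ.fderiv_right (WithTop.coe_le_coe.2 le_top)
  have hgc : ContDiff ℝ 1 (sgrad φ) :=
    ((InnerProductSpace.toDual ℝ (EuclideanSpace ℝ (Fin d))).symm.contDiff (n := 1)).comp hf'c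
  have hgd : DifferentiableAt ℝ (sgrad φ) x := (hgc.differentiable one_ne_zero).differentiableAt
  set D := fderiv ℝ (sgrad φ) x with hDdef
  have hD : HasFDerivAt (sgrad φ) D x := hgd.hasFDerivAt
  set B := fderiv ℝ (fderiv ℝ φ) x with hBdef
  have hB : HasFDerivAt (fderiv ℝ φ) B x := ((hf'c.differentiable one_ne_zero) x).hasFDerivAt
  have heq : ∀ w : EuclideanSpace ℝ (Fin d),
      (fun y => (fderiv ℝ φ y) w) = (fun y => ⟪sgrad φ y, w⟫) := by
    intro w; funext y
    exact (InnerProductSpace.toDual_symm_apply (y := fderiv ℝ φ y) (x := w)).symm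
  have hDval : ∀ v w : EuclideanSpace ℝ (Fin d), ⟪D v, w⟫ = B v w := by
    intro v w
    have happ : HasFDerivAt (fun y => (fderiv ℝ φ y) w)
        ((ContinuousLinearMap.apply ℝ ℝ w).comp B) x :=
      (ContinuousLinearMap.apply ℝ ℝ w).hasFDerivAt.comp x hB
    have hinn : HasFDerivAt (fun y => ⟪sgrad φ y, w⟫)
        ((fderivInnerCLM ℝ (sgrad φ x, w)).comp (D.prod 0)) x :=
      hD.inner ℝ (hasFDerivAt_const w x)
    rw [heq w] at happ
    have h1 := hinn.unique happ
    have h2 := congrFun (congrArg (fun (T : _ →L[ℝ] ℝ) => (T : _ → ℝ)) h1) v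
    simpa [fderivInnerCLM_apply] using h2
  have hsymm2 : IsSymmSndFDerivAt ℝ φ x := (hφ.contDiffAt).isSymmSndFDerivAt (by rw [minSmoothness_of_isRCLikeNormedField]; exact WithTop.coe_le_coe.2 le_top)
  have hsymm : ∀ v w : EuclideanSpace ℝ (Fin d), ⟪D v, w⟫ = ⟪D w, v⟫ := by
    intro v w; rw [hDval v w, hDval w v]; exact hsymm2 v w
  have hpair : ∀ w : EuclideanSpace ℝ (Fin d), fderiv ℝ φ x w = ⟪sgrad φ x, w⟫ := by
    intro w
    exact (InnerProductSpace.toDual_symm_apply (y := fderiv ℝ φ x) (x := w)).symm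
  -- φ and δ derivatives
  have hφx : HasFDerivAt φ (fderiv ℝ φ x) x := ((hφ.differentiable (by simp)) x).hasFDerivAt
  have hδx : HasDerivAt δ (deriv δ (φ x)) (φ x) :=
    ((hδ.differentiable (by simp)) (φ x)).hasDerivAt
  have hδφ : HasFDerivAt (fun y => δ (φ y)) (deriv δ (φ x) • fderiv ℝ φ x) x :=
    hδx.comp_hasFDerivAt x hφx
  -- the regularized norm squared
  have hqpos : ∀ y, 0 < ‖sgrad φ y‖ ^ 2 + ε ^ 2 := fun y =>
    add_pos_of_nonneg_of_pos (by positivity) (pow_pos hε 2)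
  have hη0pos : 0 < Real.sqrt (‖sgrad φ x‖ ^ 2 + ε ^ 2) := Real.sqrt_pos.2 (hqpos x)
  have hη0sq : Real.sqrt (‖sgrad φ x‖ ^ 2 + ε ^ 2) ^ 2 = ‖sgrad φ x‖ ^ 2 + ε ^ 2 :=
    Real.sq_sqrt (hqpos x).le
  -- derivative of q=‖∇φ‖²+ε²
  have hQ0 : HasFDerivAt (fun y => ⟪sgrad φ y, sgrad φ y⟫)
      ((fderivInnerCLM ℝ (sgrad φ x, sgrad φ x)).comp (D.prod D)) x := hD.inner ℝ hD
  have hq : HasFDerivAt (fun y => ‖sgrad φ y‖ ^ 2 + ε ^ 2)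
      ((fderivInnerCLM ℝ (sgrad φ x, sgrad φ x)).comp (D.prod D)) x := by
    have h := hQ0.add_const (ε ^ 2)
    have hfe : (fun y => ⟪sgrad φ y, sgrad φ y⟫ + ε ^ 2)
        = fun y => ‖sgrad φ y‖ ^ 2 + ε ^ 2 := by
      funext y; rw [real_inner_self_eq_norm_sq]
    rwa [hfe] at h
  -- derivative of √q
  have hηx : HasFDerivAt (fun y => Real.sqrt (‖sgrad φ y‖ ^ 2 + ε ^ 2))
      ((1 / (2 * Real.sqrt (‖sgrad φ x‖ ^ 2 + ε ^ 2))) •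
        ((fderivInnerCLM ℝ (sgrad φ x, sgrad φ x)).comp (D.prod D))) x :=
    (Real.hasDerivAt_sqrt (hqpos x).ne').comp_hasFDerivAt x hq
  -- ν : value and differentiability
  have hνfun : ν = fun y => (Real.sqrt (‖sgrad φ y‖ ^ 2 + ε ^ 2))⁻¹ • sgrad φ y :=
    funext fun y => by rw [hν y, hη y]
  have hνd : DifferentiableAt ℝ ν x := by
    rw [hνfun]
    exact (hηx.differentiableAt.inv hη0pos.ne').smul hgd
  have hνx : ν x = (Real.sqrt (‖sgrad φ x‖ ^ 2 + ε ^ 2))⁻¹ • sgrad φ x := by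
    rw [hν x, hη x]
  have hνinner : ⟪ν x, e⟫ = (Real.sqrt (‖sgrad φ x‖ ^ 2 + ε ^ 2))⁻¹ * ⟪sgrad φ x, e⟫ := by
    rw [hνx, real_inner_smul_left]
  -- decompose the vector field
  have hu : ∀ y, δΓ y • P_T y e
      = (δ (φ y) * Real.sqrt (‖sgrad φ y‖ ^ 2 + ε ^ 2)) • e
        - (δ (φ y) * ⟪sgrad φ y, e⟫) • ν y := by
    intro y
    have hsy : Real.sqrt (‖sgrad φ y‖ ^ 2 + ε ^ 2) ≠ 0 := (Real.sqrt_pos.2 (hqpos y)).ne'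
    have hνiy : ⟪ν y, e⟫ = (Real.sqrt (‖sgrad φ y‖ ^ 2 + ε ^ 2))⁻¹ * ⟪sgrad φ y, e⟫ := by
      rw [hν y, hη y, real_inner_smul_left]
    rw [hPT y e, smul_sub, smul_smul, hδΓ y, hη y, hνiy]
    congr 1
    congr 1
    field_simp
  rw [sdiv_congr' x hu]
  -- derivative of the scalar coefficients
  have hprod1 : HasFDerivAt (fun y => δ (φ y) * Real.sqrt (‖sgrad φ y‖ ^ 2 + ε ^ 2))
      (δ (φ x) • ((1 / (2 * Real.sqrt (‖sgrad φ x‖ ^ 2 + ε ^ 2))) •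
          ((fderivInnerCLM ℝ (sgrad φ x, sgrad φ x)).comp (D.prod D)))
        + Real.sqrt (‖sgrad φ x‖ ^ 2 + ε ^ 2) • (deriv δ (φ x) • fderiv ℝ φ x)) x :=
    hδφ.mul hηx
  have hce : HasFDerivAt (fun y => ⟪sgrad φ y, e⟫)
      ((fderivInnerCLM ℝ (sgrad φ x, e)).comp (D.prod 0)) x :=
    hD.inner ℝ (hasFDerivAt_const e x)
  have hprod2 : HasFDerivAt (fun y => δ (φ y) * ⟪sgrad φ y, e⟫)
      (δ (φ x) • ((fderivInnerCLM ℝ (sgrad φ x, e)).comp (D.prod 0))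
        + ⟪sgrad φ x, e⟫ • (deriv δ (φ x) • fderiv ℝ φ x)) x :=
    hδφ.mul hce
  -- split the divergence
  have hAd : DifferentiableAt ℝ
      (fun y => (δ (φ y) * Real.sqrt (‖sgrad φ y‖ ^ 2 + ε ^ 2)) • e) x :=
    hprod1.differentiableAt.smul_const e
  have hBd : DifferentiableAt ℝ (fun y => (δ (φ y) * ⟪sgrad φ y, e⟫) • ν y) x :=
    hprod2.differentiableAt.smul hνd
  rw [sdiv_sub' hAd hBd, sdiv_smul_const' hprod1.differentiableAt e,
    sdiv_smul' hprod2.differentiableAt hνd, hprod1.fderiv, hprod2.fderiv]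
  -- evaluate everything
  have hκx : κ x = sdiv ν x := hκ x
  have hδΓx : δΓ x = δ (φ x) * Real.sqrt (‖sgrad φ x‖ ^ 2 + ε ^ 2) := by rw [hδΓ x, hη x]
  rw [hκx, hδΓx, hνinner, hνx]
  simp only [ContinuousLinearMap.add_apply, ContinuousLinearMap.coe_smul',
    Pi.smul_apply, ContinuousLinearMap.coe_comp', Function.comp_apply,
    ContinuousLinearMap.prod_apply, fderivInnerCLM_apply, ContinuousLinearMap.zero_apply,
    map_smul, smul_eq_mul, inner_smul_left, inner_zero_right, conj_trivial]
  rw [hpair (sgrad φ x)]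
  -- symmetric-Hessian rewrites
  have hsw1 : ⟪sgrad φ x, D e⟫ = ⟪D (sgrad φ x), e⟫ := by
    rw [real_inner_comm]; exact hsymm e (sgrad φ x)
  have hsw2 : ⟪D e, sgrad φ x⟫ = ⟪D (sgrad φ x), e⟫ := hsymm e (sgrad φ x)
  rw [hsw1, hsw2]
  have hgg : ⟪sgrad φ x, sgrad φ x⟫
      = Real.sqrt (‖sgrad φ x‖ ^ 2 + ε ^ 2) ^ 2 - ε ^ 2 := by
    rw [real_inner_self_eq_norm_sq, hη0sq]; ring
  rw [hgg, hpair e]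
  generalize hS : Real.sqrt (‖sgrad φ x‖ ^ 2 + ε ^ 2) = S at hη0pos hη0sq ⊢
  field_simp
  ring
end
end

section
/- Let d ≥ 1, E = EuclideanSpace ℝ (Fin d), ε > 0, let φ : E → ℝ and δ : ℝ → ℝ be smooth. Define η(x) := √(‖∇φ(x)‖² + ε²), δ_Γ(x) := δ(φ(x))·η(x), P_T(x)b := b − ⟪ν(x), b⟫ν(x) with ν := ∇φ/η, and let Hess φ(x) : E → E denote the spatial Hessian of φ at x (the second Fréchet derivative viewed as a symmetric linear map). Then for every x ∈ E: P_T(x)( ∇δ_Γ(x) ) = (δ_Γ(x)/η(x)²)·P_T(x)( (Hess φ(x))(∇φ(x)) ) + (ε²/η(x))·δ'(φ(x))·∇φ(x). -/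
open scoped RealInnerProductSpace

noncomputable section

/-- Spatial Hessian of a scalar field, as a (continuous) linear map `E → E`:
the Fréchet derivative of the gradient field. -/
def sHess {d : ℕ} (f : EuclideanSpace ℝ (Fin d) → ℝ) (x : EuclideanSpace ℝ (Fin d)) :
    EuclideanSpace ℝ (Fin d) →L[ℝ] EuclideanSpace ℝ (Fin d) :=
  fderiv ℝ (sgrad f) x

/-- Eq. (B.9) in the proof of Proposition B.1: the tangential part of the gradient of the
regularized surface Dirac. -/
theorem tangential_gradient_surface_dirac
    (d : ℕ) (hd : 1 ≤ d) (ε : ℝ) (hε : 0 < ε)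
    (φ : EuclideanSpace ℝ (Fin d) → ℝ) (δ : ℝ → ℝ)
    (hφ : ContDiff ℝ (⊤ : ℕ∞) φ) (hδ : ContDiff ℝ (⊤ : ℕ∞) δ)
    (η : EuclideanSpace ℝ (Fin d) → ℝ)
    (hη : ∀ x, η x = Real.sqrt (‖sgrad φ x‖ ^ 2 + ε ^ 2))
    (ν : EuclideanSpace ℝ (Fin d) → EuclideanSpace ℝ (Fin d))
    (hν : ∀ x, ν x = (η x)⁻¹ • sgrad φ x)
    (δΓ : EuclideanSpace ℝ (Fin d) → ℝ)
    (hδΓ : ∀ x, δΓ x = δ (φ x) * η x)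
    (P_T : EuclideanSpace ℝ (Fin d) → EuclideanSpace ℝ (Fin d) → EuclideanSpace ℝ (Fin d))
    (hPT : ∀ x b, P_T x b = b - ⟪ν x, b⟫ • ν x) :
    ∀ x : EuclideanSpace ℝ (Fin d),
      P_T x (sgrad δΓ x)
        = (δΓ x / (η x) ^ 2) • P_T x ((sHess φ x) (sgrad φ x))
          + ((ε ^ 2 / η x) * deriv δ (φ x)) • sgrad φ x := by
  intro x
  classical
  set g : EuclideanSpace ℝ (Fin d) → EuclideanSpace ℝ (Fin d) := sgrad φ with hgdef
  set F : EuclideanSpace ℝ (Fin d) → (EuclideanSpace ℝ (Fin d) →L[ℝ] ℝ) := fderiv ℝ φ with hFdef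
  have hφdiff : Differentiable ℝ φ := hφ.differentiable (by simp)
  have hδdiff : Differentiable ℝ δ := hδ.differentiable (by simp)
  have hFsmooth : ContDiff ℝ (⊤:ℕ∞) F := (contDiff_infty_iff_fderiv.mp (hφ.of_le (by simp))).2
  have hFdiff : Differentiable ℝ F := hFsmooth.differentiable (by simp)
  have hF'' : HasFDerivAt F (fderiv ℝ F x) x := (hFdiff x).hasFDerivAt
  set f'' := fderiv ℝ F x with hf''def
  have hsec : ∀ v w, f'' v w = f'' w v :=
    second_derivative_symmetric (fun y => (hφdiff y).hasFDerivAt) hF''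
  have hg_inner : ∀ y v, ⟪g y, v⟫ = F y v := fun y v =>
    InnerProductSpace.toDual_symm_apply
  -- the CLM version of (toDual).symm
  set e : (EuclideanSpace ℝ (Fin d) →L[ℝ] ℝ) →L[ℝ] EuclideanSpace ℝ (Fin d) :=
    (InnerProductSpace.toDual ℝ (EuclideanSpace ℝ (Fin d))).symm.toContinuousLinearEquiv.toContinuousLinearMap with hedef
  have hgH : HasFDerivAt g (e.comp f'') x := e.hasFDerivAt.comp x hF''
  have hHeq : sHess φ x = e.comp f'' := hgH.fderiv
  have hH_inner : ∀ u v, ⟪(sHess φ x) u, v⟫ = f'' u v := by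
    intro u v
    rw [hHeq]
    exact InnerProductSpace.toDual_symm_apply
  have hH_symm : ∀ u v, ⟪(sHess φ x) u, v⟫ = ⟪u, (sHess φ x) v⟫ := by
    intro u v
    rw [hH_inner u v, real_inner_comm, hH_inner v u, hsec]
  -- positivity facts
  have hgx_norm : (0:ℝ) < ‖g x‖ ^ 2 + ε ^ 2 := by positivity
  have hηpos : 0 < η x := by rw [hη x]; exact Real.sqrt_pos.mpr hgx_norm
  have hηne : η x ≠ 0 := ne_of_gt hηpos
  have hηsq : (η x) ^ 2 = ‖g x‖ ^ 2 + ε ^ 2 := by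
    rw [hη x]; exact Real.sq_sqrt (le_of_lt hgx_norm)
  -- derivative of the regularized norm
  have hgx : HasFDerivAt g (sHess φ x) x := by rw [hHeq]; exact hgH
  have hq : HasFDerivAt (fun y => ⟪g y, g y⟫ + ε ^ 2)
      ((fderivInnerCLM ℝ (g x, g x)).comp ((sHess φ x).prod (sHess φ x))) x :=
    (hgx.inner ℝ hgx).add_const _
  have hqx_pos : (0:ℝ) < ⟪g x, g x⟫ + ε ^ 2 := by
    rw [real_inner_self_eq_norm_sq]; exact hgx_norm
  have hsqrt_eq : Real.sqrt (⟪g x, g x⟫ + ε ^ 2) = η x := by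
    rw [hη x, real_inner_self_eq_norm_sq]
  have hηH : HasFDerivAt η ((1 / (2 * η x)) •
      ((fderivInnerCLM ℝ (g x, g x)).comp ((sHess φ x).prod (sHess φ x)))) x := by
    have h1 := (Real.hasDerivAt_sqrt (ne_of_gt hqx_pos)).comp_hasFDerivAt x hq
    rw [hsqrt_eq] at h1
    exact h1.congr_of_eventuallyEq (Filter.Eventually.of_forall fun y => by
      simp only [Function.comp_apply]
      rw [hη y, real_inner_self_eq_norm_sq])
  have hA : HasFDerivAt (fun y => δ (φ y)) (deriv δ (φ x) • F x) x :=
    (hδdiff (φ x)).hasDerivAt.comp_hasFDerivAt x (hφdiff x).hasFDerivAt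
  have hδΓH : HasFDerivAt δΓ
      (δ (φ x) • ((1 / (2 * η x)) •
          ((fderivInnerCLM ℝ (g x, g x)).comp ((sHess φ x).prod (sHess φ x))))
        + η x • (deriv δ (φ x) • F x)) x := by
    have hfe : δΓ = fun y => δ (φ y) * η y := funext hδΓ
    rw [hfe]
    exact hA.mul hηH
  -- key formula for the gradient of δΓ
  have key : sgrad δΓ x
      = (η x * deriv δ (φ x)) • g x + (δ (φ x) / η x) • (sHess φ x (g x)) := by
    apply ext_inner_right ℝ
    intro v
    have lhs : ⟪sgrad δΓ x, v⟫ = fderiv ℝ δΓ x v := InnerProductSpace.toDual_symm_apply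
    rw [lhs, hδΓH.fderiv]
    simp only [ContinuousLinearMap.add_apply, ContinuousLinearMap.coe_smul', Pi.smul_apply,
      ContinuousLinearMap.comp_apply, fderivInnerCLM_apply, ContinuousLinearMap.prod_apply,
      smul_eq_mul, inner_add_left, real_inner_smul_left]
    rw [← hg_inner x v]
    rw [hH_symm (g x) v, real_inner_comm ((sHess φ x) v) (g x)]
    field_simp
    ring
  -- linearity of the projection
  have hPT_lin : ∀ (a b : ℝ) (u w : EuclideanSpace ℝ (Fin d)),
      P_T x (a • u + b • w) = a • P_T x u + b • P_T x w := by
    intro a b u w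
    simp only [hPT, inner_add_right, real_inner_smul_right]
    module
  have hPTg : P_T x (g x) = (ε ^ 2 / (η x) ^ 2) • g x := by
    rw [hPT, hν, real_inner_smul_left, real_inner_self_eq_norm_sq, smul_smul]
    have hc : (η x)⁻¹ * ‖g x‖ ^ 2 * (η x)⁻¹ = 1 - ε ^ 2 / (η x) ^ 2 := by
      have hg2 : ‖g x‖ ^ 2 = (η x) ^ 2 - ε ^ 2 := by linarith
      have h2 : ((η x) ^ 2)⁻¹ * ((η x) ^ 2 - ε ^ 2) = 1 - ε ^ 2 / (η x) ^ 2 := by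
        rw [mul_sub, inv_mul_cancel₀ (pow_ne_zero 2 hηne), inv_mul_eq_div]
      rw [hg2, ← h2, pow_two]
      ring
    rw [hc, sub_smul, one_smul, sub_sub_cancel]
  rw [key, hPT_lin, hPTg, hδΓ x, smul_smul]
  have e1 : η x * deriv δ (φ x) * (ε ^ 2 / (η x) ^ 2) = ε ^ 2 / η x * deriv δ (φ x) := by
    rw [pow_two]
    field_simp
  have e2 : δ (φ x) * η x / (η x) ^ 2 = δ (φ x) / η x := by
    rw [pow_two, mul_div_assoc, div_mul_cancel_left₀ hηne, ← one_div, mul_one_div]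
  rw [e1, e2, add_comm]
end
end

section
/- Let d ≥ 1, E = EuclideanSpace ℝ (Fin d), ε > 0, let φ : E → ℝ and δ : ℝ → ℝ be smooth, and let w : E → E be smooth with compact support. Define η := √(‖∇φ‖² + ε²), ν := ∇φ/η, κ := div ν, δ_Γ := δ(φ)·η, and P_T(x)b := b − ⟪ν(x), b⟫ν(x). Then, with integrals over E with respect to Lebesgue (volume) measure: ∫ δ_Γ(x)·κ(x)·⟪ν(x), w(x)⟫ dx = ∫ δ_Γ(x)·trace( Dw(x) ∘ P_T(x) ) dx + ε²·∫ δ'(φ(x))·⟪ν(x), w(x)⟫ dx, where Dw(x) is the Jacobian of w at x and trace(Dw ∘ P_T) is the Frobenius pairing ⟪Dw, P_T⟫ of the Jacobian with the tangential projector. -/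
open scoped RealInnerProductSpace
open MeasureTheory

noncomputable section

variable {d : ℕ}
local notation "E" => EuclideanSpace ℝ (Fin d)

lemma my_trace_eq_sum_inner (T : E →ₗ[ℝ] E) :
    LinearMap.trace ℝ E T = ∑ i, ⟪(EuclideanSpace.basisFun (Fin d) ℝ) i, T ((EuclideanSpace.basisFun (Fin d) ℝ) i)⟫ := by
  set b := EuclideanSpace.basisFun (Fin d) ℝ
  rw [LinearMap.trace_eq_matrix_trace ℝ b.toBasis, Matrix.trace]
  simp [Matrix.diag, LinearMap.toMatrix_apply, OrthonormalBasis.coe_toBasis,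
    OrthonormalBasis.coe_toBasis_repr_apply, OrthonormalBasis.repr_apply_apply]

lemma my_trace_smulRight (L : E →L[ℝ] ℝ) (u : E) :
    LinearMap.trace ℝ E ((L.smulRight u : E →L[ℝ] E) : E →ₗ[ℝ] E) = L u := by
  set b := EuclideanSpace.basisFun (Fin d) ℝ
  rw [my_trace_eq_sum_inner]
  calc ∑ i, ⟪b i, (L.smulRight u) (b i)⟫ = ∑ i, L (⟪b i, u⟫ • b i) := by
        refine Finset.sum_congr rfl fun i _ => ?_
        simp only [ContinuousLinearMap.smulRight_apply, real_inner_smul_right,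
          _root_.map_smul, smul_eq_mul]
        ring
    _ = L (∑ i, ⟪b i, u⟫ • b i) := by rw [← map_sum]
    _ = L u := by
        congr 1
        simp_rw [← OrthonormalBasis.repr_apply_apply]
        exact b.sum_repr u

lemma my_sdiv_smul {g : E → ℝ} {u : E → E} {x : E}
    (hg : DifferentiableAt ℝ g x) (hu : DifferentiableAt ℝ u x) :
    sdiv (fun y => g y • u y) x = fderiv ℝ g x (u x) + g x * sdiv u x := by
  unfold sdiv
  rw [fderiv_fun_smul hg hu]
  push_cast
  rw [(LinearMap.trace ℝ E).map_add, (LinearMap.trace ℝ E).map_smul,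
    my_trace_smulRight, smul_eq_mul, add_comm]


lemma my_integral_fderiv_eq_zero {d : ℕ} {g : EuclideanSpace ℝ (Fin d) → ℝ}
    (hg : ContDiff ℝ (⊤ : ℕ∞) g) (hgs : HasCompactSupport g) (v : EuclideanSpace ℝ (Fin d)) :
    ∫ x, fderiv ℝ g x v = 0 := by
  have h1 : Integrable g := hg.continuous.integrable_of_hasCompactSupport hgs
  have hg' : Continuous fun x => fderiv ℝ g x := (hg.fderiv_right (m := (⊤ : ℕ∞)) (by simp)).continuous
  have h2 : Integrable (fun x => fderiv ℝ g x v) := by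
    refine ((hg'.clm_apply continuous_const).integrable_of_hasCompactSupport ?_)
    exact (hgs.fderiv ℝ).comp_left (g := fun L : _ →L[ℝ] ℝ => L v) rfl
  have hfd : (fun x : EuclideanSpace ℝ (Fin d) => fderiv ℝ (fun _ => (1:ℝ)) x v * g x)
      = fun _ => 0 := by
    ext x; simp [fderiv_fun_const]
  have key := integral_mul_fderiv_eq_neg_fderiv_mul_of_integrable
      (μ := volume) (f := fun _ => (1:ℝ)) (g := g) (v := v)
      (by rw [hfd]; exact integrable_zero _ _ _) (by simpa using h2) (by simpa using h1)
      (fun x _ => differentiableAt_const _) (fun x _ => hg.differentiable (by simp) x)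
  simp only [hfd, one_mul] at key
  simpa using key

lemma my_integral_sdiv_eq_zero {d : ℕ} {V : EuclideanSpace ℝ (Fin d) → EuclideanSpace ℝ (Fin d)}
    (hV : ContDiff ℝ (⊤ : ℕ∞) V) (hVs : HasCompactSupport V) :
    ∫ x, sdiv V x = 0 := by
  set b := EuclideanSpace.basisFun (Fin d) ℝ with hb
  have hVd : Differentiable ℝ V := hV.differentiable (by simp)
  have hVi : ∀ i, ContDiff ℝ (⊤ : ℕ∞) (fun y => ⟪b i, V y⟫) := fun i => contDiff_const.inner ℝ hV
  have hVis : ∀ i, HasCompactSupport (fun y => ⟪b i, V y⟫) := by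
    intro i
    exact hVs.comp_left (g := fun z => ⟪b i, z⟫) (by simp)
  have hpt : ∀ x, sdiv V x = ∑ i, fderiv ℝ (fun y => ⟪b i, V y⟫) x (b i) := by
    intro x
    rw [sdiv, my_trace_eq_sum_inner]
    refine Finset.sum_congr rfl fun i _ => ?_
    rw [fderiv_inner_apply ℝ (differentiableAt_const (b i)) (hVd x) (b i)]
    simp [hb, EuclideanSpace.basisFun_apply, EuclideanSpace.single_apply, PiLp.inner_apply]
  rw [MeasureTheory.integral_congr_ae (Filter.Eventually.of_forall hpt)]
  rw [MeasureTheory.integral_finset_sum]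
  · exact Finset.sum_eq_zero fun i _ => my_integral_fderiv_eq_zero (hVi i) (hVis i) (b i)
  · intro i _
    refine Continuous.integrable_of_hasCompactSupport ?_ ?_
    · exact (((hVi i).fderiv_right (m := (⊤ : ℕ∞)) (by simp)).continuous).clm_apply continuous_const
    · exact ((hVis i).fderiv ℝ).comp_left (g := fun L : _ →L[ℝ] ℝ => L (b i)) rfl

set_option maxHeartbeats 1000000 in
/-- Proposition 3.6 (= Lemma B.2): integration by parts of the level-set surface tension
term; the curvature integral equals the Frobenius pairing of the Jacobian of the test field
with the tangential projector, plus the `ε²` regularization remainder. -/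
theorem surface_tension_integration_by_parts
    (d : ℕ) (hd : 1 ≤ d) (ε : ℝ) (hε : 0 < ε)
    (φ : EuclideanSpace ℝ (Fin d) → ℝ) (δ : ℝ → ℝ)
    (w : EuclideanSpace ℝ (Fin d) → EuclideanSpace ℝ (Fin d))
    (hφ : ContDiff ℝ (⊤ : ℕ∞) φ) (hδ : ContDiff ℝ (⊤ : ℕ∞) δ) (hw : ContDiff ℝ (⊤ : ℕ∞) w)
    (hwsupp : HasCompactSupport w)
    (η : EuclideanSpace ℝ (Fin d) → ℝ)
    (hη : ∀ x, η x = Real.sqrt (‖sgrad φ x‖ ^ 2 + ε ^ 2))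
    (ν : EuclideanSpace ℝ (Fin d) → EuclideanSpace ℝ (Fin d))
    (hν : ∀ x, ν x = (η x)⁻¹ • sgrad φ x)
    (κ : EuclideanSpace ℝ (Fin d) → ℝ)
    (hκ : ∀ x, κ x = sdiv ν x)
    (δΓ : EuclideanSpace ℝ (Fin d) → ℝ)
    (hδΓ : ∀ x, δΓ x = δ (φ x) * η x)
    (P_T : EuclideanSpace ℝ (Fin d) →
      (EuclideanSpace ℝ (Fin d) →L[ℝ] EuclideanSpace ℝ (Fin d)))
    (hPT : ∀ x b, P_T x b = b - ⟪ν x, b⟫ • ν x) :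
    ∫ x, δΓ x * κ x * ⟪ν x, w x⟫
      = (∫ x, δΓ x *
            LinearMap.trace ℝ (EuclideanSpace ℝ (Fin d))
              (((fderiv ℝ w x).comp (P_T x)) : _ →ₗ[ℝ] _))
        + ε ^ 2 * ∫ x, deriv δ (φ x) * ⟪ν x, w x⟫ := by
  classical
  set G : EuclideanSpace ℝ (Fin d) → EuclideanSpace ℝ (Fin d) := sgrad φ with hGdef
  set b := EuclideanSpace.basisFun (Fin d) ℝ with hbdef
  have hbrepr : ∀ z : EuclideanSpace ℝ (Fin d), z = ∑ i, ⟪b i, z⟫ • b i := by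
    intro z
    have h := (b.sum_repr z).symm
    simp_rw [OrthonormalBasis.repr_apply_apply] at h
    exact h
  have hφd : Differentiable ℝ φ := hφ.differentiable (by simp)
  have hwd : Differentiable ℝ w := hw.differentiable (by simp)
  have hgradApply : ∀ x v, ⟪G x, v⟫ = fderiv ℝ φ x v := by
    intro x v
    exact InnerProductSpace.toDual_symm_apply
  have hfdφC : ContDiff ℝ (⊤ : ℕ∞) (fderiv ℝ φ) := hφ.fderiv_right (m := (⊤ : ℕ∞)) (by simp)
  have hfd2 : ∀ x, HasFDerivAt (fderiv ℝ φ) (fderiv ℝ (fderiv ℝ φ) x) x :=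
    fun x => ((hfdφC.differentiable (by simp)) x).hasFDerivAt
  have hφ' : ∀ y, HasFDerivAt φ (fderiv ℝ φ y) y := fun y => (hφd y).hasFDerivAt
  have hGeq : G = fun x => ∑ i, (fderiv ℝ φ x (b i)) • b i := by
    funext x
    conv_lhs => rw [hbrepr (G x)]
    refine Finset.sum_congr rfl fun i _ => ?_
    rw [real_inner_comm, hgradApply]
  have hGsmooth : ContDiff ℝ (⊤ : ℕ∞) G := by
    rw [hGeq]
    exact ContDiff.sum fun i _ => (hfdφC.clm_apply contDiff_const).smul contDiff_const
  have hGd : Differentiable ℝ G := hGsmooth.differentiable (by simp)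
  have hGfderiv : ∀ x v, fderiv ℝ G x v
      = ∑ i, (fderiv ℝ (fderiv ℝ φ) x v (b i)) • b i := by
    intro x v
    have hsum : HasFDerivAt G
        (∑ i, ((ContinuousLinearMap.apply ℝ ℝ (b i)).comp
          (fderiv ℝ (fderiv ℝ φ) x)).smulRight (b i)) x := by
      rw [hGeq]
      refine HasFDerivAt.fun_sum fun i _ => ?_
      exact (((ContinuousLinearMap.apply ℝ ℝ (b i)).hasFDerivAt).comp x (hfd2 x)).smul_const (b i)
    rw [hsum.fderiv]
    simp [ContinuousLinearMap.smulRight_apply]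
  have hHinner : ∀ x u v, ⟪fderiv ℝ G x u, v⟫ = fderiv ℝ (fderiv ℝ φ) x u v := by
    intro x u v
    rw [hGfderiv, sum_inner]
    conv_rhs => rw [hbrepr v, map_sum]
    refine Finset.sum_congr rfl fun i _ => ?_
    rw [real_inner_smul_left, _root_.map_smul, smul_eq_mul, mul_comm]
  have hHsymm : ∀ x u v, ⟪fderiv ℝ G x u, v⟫ = ⟪fderiv ℝ G x v, u⟫ := by
    intro x u v
    rw [hHinner, hHinner]
    exact second_derivative_symmetric hφ' (hfd2 x) u v
  -- eta facts
  have hηpos : ∀ x, 0 < η x := by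
    intro x
    rw [hη]
    have : (0:ℝ) < ‖sgrad φ x‖ ^ 2 + ε ^ 2 := by positivity
    exact Real.sqrt_pos.2 this
  have hηne : ∀ x, η x ≠ 0 := fun x => (hηpos x).ne'
  have hηsq : ∀ x, η x ^ 2 = ‖G x‖ ^ 2 + ε ^ 2 := by
    intro x
    rw [hη]
    exact Real.sq_sqrt (by positivity)
  have hnormsqC : ContDiff ℝ (⊤ : ℕ∞) fun x => ‖G x‖ ^ 2 + ε ^ 2 :=
    (hGsmooth.norm_sq ℝ).add contDiff_const
  have hηC : ContDiff ℝ (⊤ : ℕ∞) η := by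
    rw [funext hη]
    refine contDiff_iff_contDiffAt.2 fun x => ?_
    exact (Real.contDiffAt_sqrt (by positivity)).comp x hnormsqC.contDiffAt
  have hηd : Differentiable ℝ η := hηC.differentiable (by simp)
  have hηfder : ∀ x v, fderiv ℝ η x v = (η x)⁻¹ * ⟪G x, fderiv ℝ G x v⟫ := by
    intro x v
    have hq : HasFDerivAt (fun y => ‖G y‖ ^ 2 + ε ^ 2)
        (fderiv ℝ (fun y => ‖G y‖ ^ 2 + ε ^ 2) x) x :=
      ((hnormsqC.differentiable (by simp)) x).hasFDerivAt
    have hqv : fderiv ℝ (fun y => ‖G y‖ ^ 2 + ε ^ 2) x v = 2 * ⟪G x, fderiv ℝ G x v⟫ := by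
      have h1 : (fun y => ‖G y‖ ^ 2 + ε ^ 2) = fun y => ⟪G y, G y⟫ + ε ^ 2 := by
        funext y
        rw [real_inner_self_eq_norm_sq]
      rw [h1]
      rw [fderiv_add_const (c := ε ^ 2)]
      rw [fderiv_inner_apply ℝ (hGd x) (hGd x) v]
      rw [real_inner_comm (fderiv ℝ G x v) (G x)]
      ring
    have hsq : HasFDerivAt η ((1 / (2 * η x)) • fderiv ℝ (fun y => ‖G y‖ ^ 2 + ε ^ 2) x) x := by
      have h2 := hq.sqrt (by positivity)
      have h3 : η = fun y => Real.sqrt (‖G y‖ ^ 2 + ε ^ 2) := funext hη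
      rw [h3]
      convert h2 using 2
    rw [hsq.fderiv]
    simp only [ContinuousLinearMap.coe_smul', Pi.smul_apply, smul_eq_mul]
    rw [hqv]
    have := hηne x
    field_simp
  have hνC : ContDiff ℝ (⊤ : ℕ∞) ν := by
    rw [funext hν]
    exact (hηC.inv hηne).smul hGsmooth
  have hνd : Differentiable ℝ ν := hνC.differentiable (by simp)
  have hGην : ∀ x, ⟪G x, w x⟫ = η x * ⟪ν x, w x⟫ := by
    intro x
    rw [hν, real_inner_smul_left, ← mul_assoc, mul_inv_cancel₀ (hηne x), one_mul]
  -- delta composition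
  have hδφC : ContDiff ℝ (⊤ : ℕ∞) fun y => δ (φ y) := hδ.comp hφ
  have hδφd : Differentiable ℝ fun y => δ (φ y) := hδφC.differentiable (by simp)
  have hδφ' : ∀ x v, fderiv ℝ (fun y => δ (φ y)) x v = deriv δ (φ x) * ⟪G x, v⟫ := by
    intro x v
    have h1 : HasFDerivAt (fun y => δ (φ y)) (deriv δ (φ x) • fderiv ℝ φ x) x :=
      ((hδ.differentiable (by simp) (φ x)).hasDerivAt).comp_hasFDerivAt x (hφ' x)
    rw [h1.fderiv]
    simp only [ContinuousLinearMap.coe_smul', Pi.smul_apply, smul_eq_mul]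
    rw [hgradApply]
  -- the scalar coefficient function for V1
  set g₁ : EuclideanSpace ℝ (Fin d) → ℝ := fun y => δ (φ y) * ⟪G y, w y⟫ with hg₁def
  have hg₁C : ContDiff ℝ (⊤ : ℕ∞) g₁ := hδφC.mul (hGsmooth.inner ℝ hw)
  have hδΓη : ∀ x, δΓ x = δ (φ x) * η x := hδΓ
  have hg₁ν : ∀ x, fderiv ℝ g₁ x (ν x)
      = deriv δ (φ x) * (η x ^ 2 - ε ^ 2) * ⟪ν x, w x⟫
        + δ (φ x) * fderiv ℝ η x (w x)
        + δΓ x * ⟪ν x, fderiv ℝ w x (ν x)⟫ := by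
    intro x
    rw [hg₁def]
    rw [fderiv_fun_mul (hδφd x) ((hGsmooth.inner ℝ hw).differentiable (by simp) x)]
    simp only [ContinuousLinearMap.add_apply, ContinuousLinearMap.coe_smul',
      Pi.smul_apply, smul_eq_mul]
    rw [hδφ', fderiv_inner_apply ℝ (hGd x) (hwd x) (ν x)]
    have e1 : ⟪G x, ν x⟫ = (η x)⁻¹ * (η x ^ 2 - ε ^ 2) := by
      rw [hν, real_inner_smul_right, real_inner_self_eq_norm_sq,
        show ‖G x‖ ^ 2 = η x ^ 2 - ε ^ 2 from by linarith [hηsq x]]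
    have e2 : ⟪fderiv ℝ G x (ν x), w x⟫ = fderiv ℝ η x (w x) := by
      rw [hHsymm, real_inner_comm, hν, real_inner_smul_left, hηfder]
    have e3 : ⟪G x, fderiv ℝ w x (ν x)⟫ = η x * ⟪ν x, fderiv ℝ w x (ν x)⟫ := by
      rw [hν, real_inner_smul_left, ← mul_assoc, mul_inv_cancel₀ (hηne x), one_mul]
    rw [e1, e2, e3, hGην x, hδΓη x]
    have hne := hηne x
    field_simp
    ring
  -- V1 divergence-free integral
  set V₁ : EuclideanSpace ℝ (Fin d) → EuclideanSpace ℝ (Fin d) := fun y => g₁ y • ν y with hV₁def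
  have hV₁C : ContDiff ℝ (⊤ : ℕ∞) V₁ := hg₁C.smul hνC
  have hwzero : ∀ x, x ∉ tsupport w → w x = 0 := fun x hx => image_eq_zero_of_notMem_tsupport hx
  have hV₁S : HasCompactSupport V₁ := by
    refine HasCompactSupport.intro hwsupp fun x hx => ?_
    simp only [hV₁def, hg₁def, hwzero x hx, inner_zero_right, mul_zero, zero_smul]
  have hIA0 : ∫ x, sdiv V₁ x = 0 := my_integral_sdiv_eq_zero hV₁C hV₁S
  -- V2 divergence-free integral
  set V₂ : EuclideanSpace ℝ (Fin d) → EuclideanSpace ℝ (Fin d) :=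
    fun y => (δ (φ y) * η y) • w y with hV₂def
  have hV₂C : ContDiff ℝ (⊤ : ℕ∞) V₂ := (hδφC.mul hηC).smul hw
  have hV₂S : HasCompactSupport V₂ := by
    refine HasCompactSupport.intro hwsupp fun x hx => ?_
    simp only [hV₂def, hwzero x hx, smul_zero]
  have hIB0 : ∫ x, sdiv V₂ x = 0 := my_integral_sdiv_eq_zero hV₂C hV₂S
  -- named integrands
  set F1 : EuclideanSpace ℝ (Fin d) → ℝ := fun x => δΓ x * κ x * ⟪ν x, w x⟫ with hF1def
  set F2 : EuclideanSpace ℝ (Fin d) → ℝ :=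
    fun x => deriv δ (φ x) * (η x ^ 2 - ε ^ 2) * ⟪ν x, w x⟫ with hF2def
  set F3 : EuclideanSpace ℝ (Fin d) → ℝ := fun x => δ (φ x) * fderiv ℝ η x (w x) with hF3def
  set F4 : EuclideanSpace ℝ (Fin d) → ℝ :=
    fun x => δΓ x * ⟪ν x, fderiv ℝ w x (ν x)⟫ with hF4def
  set F5 : EuclideanSpace ℝ (Fin d) → ℝ :=
    fun x => deriv δ (φ x) * η x ^ 2 * ⟪ν x, w x⟫ with hF5def
  set F6 : EuclideanSpace ℝ (Fin d) → ℝ := fun x => δΓ x * sdiv w x with hF6def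
  set F7 : EuclideanSpace ℝ (Fin d) → ℝ := fun x => deriv δ (φ x) * ⟪ν x, w x⟫ with hF7def
  -- pointwise expansion of div V1
  have hsdV₁ : ∀ x, sdiv V₁ x = F1 x + (F2 x + F3 x + F4 x) := by
    intro x
    simp only [hV₁def]
    rw [my_sdiv_smul (hg₁C.differentiable (by simp) x) (hνd x)]
    rw [hg₁ν x]
    simp only [hF1def, hF2def, hF3def, hF4def, hg₁def]
    rw [hGην x, hκ x, hδΓη x]
    ring
  -- pointwise expansion of div V2
  have hsdV₂ : ∀ x, sdiv V₂ x = F5 x + F3 x + F6 x := by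
    intro x
    simp only [hV₂def]
    rw [my_sdiv_smul ((hδφC.mul hηC).differentiable (by simp) x) (hwd x)]
    have h1 : fderiv ℝ (fun y => δ (φ y) * η y) x (w x)
        = deriv δ (φ x) * ⟪G x, w x⟫ * η x + δ (φ x) * fderiv ℝ η x (w x) := by
      rw [fderiv_fun_mul (hδφd x) (hηd x)]
      simp only [ContinuousLinearMap.add_apply, ContinuousLinearMap.coe_smul',
        Pi.smul_apply, smul_eq_mul]
      rw [hδφ']
      ring
    rw [h1]
    simp only [hF5def, hF3def, hF6def]
    rw [hGην x, hδΓη x]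
    ring
  -- trace identity for the projected Jacobian
  have htr : ∀ x, LinearMap.trace ℝ (EuclideanSpace ℝ (Fin d))
      (((fderiv ℝ w x).comp (P_T x)) : _ →ₗ[ℝ] _)
      = sdiv w x - ⟪ν x, fderiv ℝ w x (ν x)⟫ := by
    intro x
    have hcomp : (fderiv ℝ w x).comp (P_T x)
        = fderiv ℝ w x - (innerSL ℝ (ν x)).smulRight (fderiv ℝ w x (ν x)) := by
      ext v
      rw [ContinuousLinearMap.comp_apply, hPT x v]
      simp only [map_sub, _root_.map_smul, ContinuousLinearMap.sub_apply,
        ContinuousLinearMap.smulRight_apply, innerSL_apply_apply]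
    rw [hcomp]
    push_cast
    rw [(LinearMap.trace ℝ (EuclideanSpace ℝ (Fin d))).map_sub, my_trace_smulRight]
    rw [innerSL_apply_apply]
    rfl
  -- continuity facts
  have htraceCont : Continuous fun L : EuclideanSpace ℝ (Fin d) →L[ℝ] EuclideanSpace ℝ (Fin d) =>
      LinearMap.trace ℝ (EuclideanSpace ℝ (Fin d)) ↑L :=
    LinearMap.continuous_of_finiteDimensional
      ((LinearMap.trace ℝ (EuclideanSpace ℝ (Fin d))).comp (ContinuousLinearMap.coeLM ℝ))
  have hsdivw_cont : Continuous (sdiv w) :=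
    htraceCont.comp (hw.fderiv_right (m := (⊤ : ℕ∞)) (by simp)).continuous
  have hsdivν_cont : Continuous (sdiv ν) :=
    htraceCont.comp (hνC.fderiv_right (m := (⊤ : ℕ∞)) (by simp)).continuous
  have hδΓcont : Continuous δΓ :=
    (hδφC.continuous.mul hηC.continuous).congr fun x => (hδΓη x).symm
  have hνwcont : Continuous fun x => ⟪ν x, w x⟫ := hνC.continuous.inner hw.continuous
  have hκcont : Continuous κ := hsdivν_cont.congr fun x => (hκ x).symm
  have hfηw : Continuous fun x => fderiv ℝ η x (w x) :=
    ((hηC.fderiv_right (m := (⊤ : ℕ∞)) (by simp)).continuous).clm_apply hw.continuous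
  have hfwν : Continuous fun x => fderiv ℝ w x (ν x) :=
    ((hw.fderiv_right (m := (⊤ : ℕ∞)) (by simp)).continuous).clm_apply hνC.continuous
  have hδ'cont : Continuous fun x => deriv δ (φ x) :=
    (hδ.continuous_deriv (by simp)).comp hφ.continuous
  -- integrability
  have hInt : ∀ F : EuclideanSpace ℝ (Fin d) → ℝ, Continuous F →
      (∀ x, x ∉ tsupport w → F x = 0) → Integrable F := fun F hFc hFs =>
    hFc.integrable_of_hasCompactSupport (HasCompactSupport.intro hwsupp hFs)
  have hfw0 : ∀ x, x ∉ tsupport w → fderiv ℝ w x = 0 := by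
    intro x hx
    by_contra h
    exact hx (support_fderiv_subset ℝ (Function.mem_support.mpr h))
  have hiF1 : Integrable F1 := by
    refine hInt F1 ((hδΓcont.mul hκcont).mul hνwcont) fun x hx => ?_
    simp only [hF1def, hwzero x hx, inner_zero_right, mul_zero]
  have hiF2 : Integrable F2 := by
    refine hInt F2 ((hδ'cont.mul (((hηC.continuous.pow 2).sub continuous_const))).mul hνwcont)
      fun x hx => ?_
    simp only [hF2def, hwzero x hx, inner_zero_right, mul_zero]
  have hiF3 : Integrable F3 := by
    refine hInt F3 (hδφC.continuous.mul hfηw) fun x hx => ?_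
    simp only [hF3def, hwzero x hx, map_zero, mul_zero]
  have hiF4 : Integrable F4 := by
    refine hInt F4 (hδΓcont.mul (hνC.continuous.inner hfwν)) fun x hx => ?_
    simp only [hF4def, hfw0 x hx, ContinuousLinearMap.zero_apply, inner_zero_right, mul_zero]
  have hiF5 : Integrable F5 := by
    refine hInt F5 ((hδ'cont.mul (hηC.continuous.pow 2)).mul hνwcont) fun x hx => ?_
    simp only [hF5def, hwzero x hx, inner_zero_right, mul_zero]
  have hiF6 : Integrable F6 := by
    refine hInt F6 (hδΓcont.mul hsdivw_cont) fun x hx => ?_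
    simp only [hF6def, sdiv, hfw0 x hx]
    simp
  have hiF7 : Integrable F7 := by
    refine hInt F7 (hδ'cont.mul hνwcont) fun x hx => ?_
    simp only [hF7def, hwzero x hx, inner_zero_right, mul_zero]
  -- integral identities
  have hIA : (∫ x, F1 x) + ((∫ x, F2 x) + (∫ x, F3 x) + (∫ x, F4 x)) = 0 := by
    have e1 : ∫ x, sdiv V₁ x = ∫ x, (F1 x + (F2 x + F3 x + F4 x)) :=
      integral_congr_ae (Filter.Eventually.of_forall hsdV₁)
    have k1 : ∫ x, (F2 x + F3 x) = (∫ x, F2 x) + ∫ x, F3 x := integral_add hiF2 hiF3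
    have k2 : ∫ x, (F2 x + F3 x + F4 x) = (∫ x, (F2 x + F3 x)) + ∫ x, F4 x :=
      integral_add (hiF2.add hiF3) hiF4
    have k3 : ∫ x, (F1 x + (F2 x + F3 x + F4 x))
        = (∫ x, F1 x) + ∫ x, (F2 x + F3 x + F4 x) :=
      integral_add hiF1 ((hiF2.add hiF3).add hiF4)
    linarith [hIA0, e1, k1, k2, k3]
  have hIB : (∫ x, F5 x) + (∫ x, F3 x) + (∫ x, F6 x) = 0 := by
    have e1 : ∫ x, sdiv V₂ x = ∫ x, (F5 x + F3 x + F6 x) :=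
      integral_congr_ae (Filter.Eventually.of_forall hsdV₂)
    have k1 : ∫ x, (F5 x + F3 x) = (∫ x, F5 x) + ∫ x, F3 x := integral_add hiF5 hiF3
    have k2 : ∫ x, (F5 x + F3 x + F6 x) = (∫ x, (F5 x + F3 x)) + ∫ x, F6 x :=
      integral_add (hiF5.add hiF3) hiF6
    linarith [hIB0, e1, k1, k2]
  have hF2split : (∫ x, F2 x) = (∫ x, F5 x) - ε ^ 2 * ∫ x, F7 x := by
    have e : ∀ x, F2 x = F5 x - ε ^ 2 * F7 x := by
      intro x
      simp only [hF2def, hF5def, hF7def]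
      ring
    have k1 : ∫ x, (F5 x - ε ^ 2 * F7 x) = (∫ x, F5 x) - ∫ x, ε ^ 2 * F7 x :=
      integral_sub hiF5 (hiF7.const_mul (ε ^ 2))
    have k2 : ∫ x, ε ^ 2 * F7 x = ε ^ 2 * ∫ x, F7 x := integral_const_mul (ε ^ 2) F7
    rw [integral_congr_ae (Filter.Eventually.of_forall e), k1, k2]
  have hRHS1 : (∫ x, δΓ x * LinearMap.trace ℝ (EuclideanSpace ℝ (Fin d))
        (((fderiv ℝ w x).comp (P_T x)) : _ →ₗ[ℝ] _))
      = (∫ x, F6 x) - ∫ x, F4 x := by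
    have e : ∀ x, δΓ x * LinearMap.trace ℝ (EuclideanSpace ℝ (Fin d))
        (((fderiv ℝ w x).comp (P_T x)) : _ →ₗ[ℝ] _) = F6 x - F4 x := by
      intro x
      rw [htr x]
      simp only [hF6def, hF4def]
      ring
    have k1 : ∫ x, (F6 x - F4 x) = (∫ x, F6 x) - ∫ x, F4 x := integral_sub hiF6 hiF4
    rw [integral_congr_ae (Filter.Eventually.of_forall e), k1]
  rw [hRHS1]
  linarith [hIA, hIB, hF2split]
end
end

section
/- Let d ≥ 1, E = EuclideanSpace ℝ (Fin d). Fix constants Re, We, Fr, ε > 0, ρ₁, ρ₂, μ₁, μ₂ > 0, a unit vector ĵ ∈ E, and a smooth H : ℝ → ℝ with δ := H'. Let u : ℝ × E → E, p : ℝ × E → ℝ, φ : ℝ × E → ℝ be smooth. Define pointwise ρ := ρ₁·H(φ) + ρ₂·(1 − H(φ)), μ := μ₁·H(φ) + μ₂·(1 − H(φ)), y(x) := ⟪x, ĵ⟫, η := √(‖∇φ‖² + ε²), ν := ∇φ/η, κ := div ν, δ_Γ := δ(φ)·η, P_T b := b − ⟪ν, b⟫ν, and the viscous stress τ := (μ/Re)·(D_x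 u + (D_x u)*), where (D_x u)* is the adjoint of the spatial Jacobian. Assume that for all (t,x): (i) div_x u = 0; (ii) ∂ₜφ + ⟪u, ∇φ⟫ = 0; (iii) the momentum equation ∂ₜ(ρ u) + div_x(ρ u ⊗ u) − div_x τ + ∇p + (1/We)·δ_Γ·κ·ν + (1/Fr²)·ρ·ĵ = 0 holds as an equation in E, where div_x of an operator-valued field A is the vector with components Σ_j ∂_j A_{ij} and (u⊗u)b := ⟪u,b⟫u. Then, with the local energy 𝓗 := ½ρ‖u‖² + (1/Fr²)·ρ·y + (1/We)·δ_Γ, the local energy balance holds pointwise for all (t,x): ∂ₜ𝓗 + div_x( (𝓗 + p)·u − τ u − (1/We)·δ_Γ·P_T u ) + trace( τ ∘ D_x u ) + (ε²/We)·δ'(φ)·⟪u, ν⟫ = 0. -/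
open scoped RealInnerProductSpace

noncomputable section

/-- Divergence of an operator-valued field `A` : the vector with components `Σ_j ∂_j A_{ij}`. -/
def sdivOp {d : ℕ}
    (A : EuclideanSpace ℝ (Fin d) → (EuclideanSpace ℝ (Fin d) →L[ℝ] EuclideanSpace ℝ (Fin d)))
    (x : EuclideanSpace ℝ (Fin d)) : EuclideanSpace ℝ (Fin d) :=
  ∑ j : Fin d, fderiv ℝ (fun y => A y (EuclideanSpace.single j 1)) x (EuclideanSpace.single j 1)

section Helpers

variable {d : ℕ} {X F : Type*} [NormedAddCommGroup X] [NormedSpace ℝ X]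
  [NormedAddCommGroup F] [NormedSpace ℝ F]

local notation "E" => EuclideanSpace ℝ (Fin d)

lemma LEB.inner_gradient (f : E → ℝ) (x v : E) :
    ⟪gradient f x, v⟫ = fderiv ℝ f x v := InnerProductSpace.toDual_symm_apply

lemma LEB.hasDerivAt_sect (G : ℝ × X → F) (t : ℝ) (x : X) (hG : DifferentiableAt ℝ G (t, x)) :
    HasDerivAt (fun s => G (s, x)) (fderiv ℝ G (t, x) (1, 0)) t := by
  have h1 : HasDerivAt (fun s : ℝ => (s, x)) ((1 : ℝ), (0 : X)) t :=
    HasDerivAt.prodMk (hasDerivAt_id t) (hasDerivAt_const t x)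
  exact hG.hasFDerivAt.comp_hasDerivAt t h1

lemma LEB.deriv_sect (G : ℝ × X → F) (t : ℝ) (x : X) (hG : DifferentiableAt ℝ G (t, x)) :
    deriv (fun s => G (s, x)) t = fderiv ℝ G (t, x) (1, 0) :=
  (LEB.hasDerivAt_sect G t x hG).deriv

lemma LEB.hasFDerivAt_slice (G : ℝ × X → F) (t : ℝ) (x : X) (hG : DifferentiableAt ℝ G (t, x)) :
    HasFDerivAt (fun y => G (t, y))
      ((fderiv ℝ G (t, x)).comp (ContinuousLinearMap.inr ℝ ℝ X)) x := by
  have h1 : HasFDerivAt (fun y : X => ((t, y) : ℝ × X)) (ContinuousLinearMap.inr ℝ ℝ X) x :=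
    HasFDerivAt.prodMk (hasFDerivAt_const t x) (hasFDerivAt_id x)
  exact hG.hasFDerivAt.comp x h1

lemma LEB.fderiv_slice (G : ℝ × X → F) (t : ℝ) (x : X) (hG : DifferentiableAt ℝ G (t, x)) :
    fderiv ℝ (fun y => G (t, y)) x
      = (fderiv ℝ G (t, x)).comp (ContinuousLinearMap.inr ℝ ℝ X) :=
  (LEB.hasFDerivAt_slice G t x hG).fderiv

lemma LEB.contDiff_slice {n : WithTop ℕ∞} (G : ℝ × X → F) (t : ℝ) (hG : ContDiff ℝ n G) :
    ContDiff ℝ n (fun y => G (t, y)) :=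
  hG.comp (contDiff_const.prodMk contDiff_id)

lemma LEB.clairaut (φ : ℝ × X → ℝ) (hφ : ContDiff ℝ (⊤ : ℕ∞) φ) (z : ℝ × X) (a b : ℝ × X) :
    fderiv ℝ (fun w => fderiv ℝ φ w a) z b = fderiv ℝ (fun w => fderiv ℝ φ w b) z a := by
  have hsym : IsSymmSndFDerivAt ℝ φ z := hφ.contDiffAt.isSymmSndFDerivAt (by rw [minSmoothness_of_isRCLikeNormedField]; exact WithTop.coe_le_coe.2 (le_top : (2:ℕ∞) ≤ ⊤))
  have hf' : ContDiff ℝ (⊤ : ℕ∞) (fderiv ℝ φ) := hφ.fderiv_right (by simp)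
  have h1 : ∀ c : ℝ × X, fderiv ℝ (fun w => fderiv ℝ φ w c) z
      = (fderiv ℝ (fderiv ℝ φ) z).flip c := by
    intro c
    rw [fderiv_clm_apply ((hf'.differentiable (by simp)).differentiableAt)
      (differentiableAt_const c)]
    simp
  rw [h1 a, h1 b]
  simpa using hsym b a

lemma LEB.contDiff_adjoint :
    ContDiff ℝ (⊤ : ℕ∞) (fun T : E →L[ℝ] E => ContinuousLinearMap.adjoint T) := by
  have h : IsBoundedLinearMap ℝ (fun T : E →L[ℝ] E => ContinuousLinearMap.adjoint T) := by
    refine ⟨⟨fun T S => map_add _ T S, fun c T => by simp⟩, 1, one_pos, fun T => ?_⟩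
    rw [one_mul, ContinuousLinearMap.adjoint.norm_map]
  exact h.contDiff

lemma LEB.adjoint_rankOne (a b : E) :
    ContinuousLinearMap.adjoint ((innerSL ℝ a).smulRight b) = (innerSL ℝ b).smulRight a := by
  refine ContinuousLinearMap.ext fun w => ?_
  refine ext_inner_left ℝ fun v => ?_
  rw [ContinuousLinearMap.adjoint_inner_right]
  simp only [ContinuousLinearMap.smulRight_apply, innerSL_apply_apply, real_inner_smul_right,
    real_inner_smul_left]
  rw [real_inner_comm]
  ring

lemma LEB.trace_eq_sum (A : E →L[ℝ] E) :
    LinearMap.trace ℝ E (A : E →ₗ[ℝ] E) = ∑ i : Fin d, A (EuclideanSpace.single i 1) i := by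
  rw [LinearMap.trace_eq_matrix_trace ℝ (EuclideanSpace.basisFun (Fin d) ℝ).toBasis]
  simp [Matrix.trace, LinearMap.toMatrix_apply, Matrix.diag]

lemma LEB.sum_single_smul (w : E) : ∑ i : Fin d, w i • EuclideanSpace.single i 1 = w := by
  ext j
  have : (∑ i : Fin d, w i • EuclideanSpace.single i 1) j
      = ∑ i : Fin d, (w i • EuclideanSpace.single i 1 : E) j :=
    by rw [WithLp.ofLp_sum, Finset.sum_apply]
  rw [this]
  simp [EuclideanSpace.single_apply]

lemma LEB.trace_smulRight (L : E →L[ℝ] ℝ) (v : E) :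
    LinearMap.trace ℝ E ((L.smulRight v) : E →ₗ[ℝ] E) = L v := by
  rw [LEB.trace_eq_sum]
  simp only [ContinuousLinearMap.smulRight_apply, PiLp.smul_apply, smul_eq_mul]
  calc ∑ i : Fin d, L (EuclideanSpace.single i 1) * v i
      = L (∑ i : Fin d, v i • EuclideanSpace.single i 1) := by
        rw [map_sum]; congr 1; ext i; rw [map_smul]; simp [mul_comm]
    _ = L v := by rw [LEB.sum_single_smul]

lemma LEB.sdiv_add (f g : E → E) (x : E) (hf : DifferentiableAt ℝ f x)
    (hg : DifferentiableAt ℝ g x) :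
    sdiv (fun y => f y + g y) x = sdiv f x + sdiv g x := by
  unfold sdiv; rw [fderiv_fun_add hf hg]; push_cast; rw [map_add]

lemma LEB.sdiv_sub (f g : E → E) (x : E) (hf : DifferentiableAt ℝ f x)
    (hg : DifferentiableAt ℝ g x) :
    sdiv (fun y => f y - g y) x = sdiv f x - sdiv g x := by
  unfold sdiv; rw [fderiv_fun_sub hf hg]; push_cast; rw [map_sub]

lemma LEB.sdiv_smulfield (a : E → ℝ) (w : E → E) (x : E)
    (ha : DifferentiableAt ℝ a x) (hw : DifferentiableAt ℝ w x) :
    sdiv (fun y => a y • w y) x = fderiv ℝ a x (w x) + a x * sdiv w x := by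
  unfold sdiv
  rw [fderiv_fun_smul ha hw]
  push_cast
  rw [map_add, map_smul, LEB.trace_smulRight]
  simp [smul_eq_mul]; ring

lemma LEB.trace_comp_flip (B : E → (E →L[ℝ] E)) (x : E) (c : E) (hB : DifferentiableAt ℝ B x) :
    sdiv (fun y => B y c) x
      = LinearMap.trace ℝ E (((fderiv ℝ B x).flip c : E →L[ℝ] E) : E →ₗ[ℝ] E) := by
  unfold sdiv
  rw [fderiv_clm_apply hB (differentiableAt_const c)]
  simp

lemma LEB.sdiv_clm_apply (B : E → (E →L[ℝ] E)) (w : E → E) (x : E)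
    (hB : DifferentiableAt ℝ B x) (hw : DifferentiableAt ℝ w x) :
    sdiv (fun y => B y (w y)) x
      = LinearMap.trace ℝ E (((B x).comp (fderiv ℝ w x)) : E →ₗ[ℝ] E)
        + sdiv (fun y => B y (w x)) x := by
  rw [LEB.trace_comp_flip B x (w x) hB]
  unfold sdiv
  rw [fderiv_clm_apply hB hw]
  push_cast
  rw [map_add]

lemma LEB.coord_eq_inner (v : E) (i : Fin d) : v i = ⟪EuclideanSpace.single i (1:ℝ), v⟫ := by
  simp [EuclideanSpace.inner_single_left]

lemma LEB.inner_fderiv_swap {E' : Type*} [NormedAddCommGroup E'] [InnerProductSpace ℝ E']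
    (c : E') (w : X → E') (x : X) (v : X) (hw : DifferentiableAt ℝ w x) :
    ⟪c, fderiv ℝ w x v⟫ = fderiv ℝ (fun y => ⟪c, w y⟫) x v := by
  have : fderiv ℝ (fun y => ⟪c, w y⟫) x = (innerSL ℝ c).comp (fderiv ℝ w x) :=
    ((innerSL ℝ c).hasFDerivAt.comp x hw.hasFDerivAt).fderiv
  rw [this]; rfl

lemma LEB.sdiv_eq_sum_fderiv_inner (w : E → E) (x : E) (hw : DifferentiableAt ℝ w x) :
    sdiv w x = ∑ j : Fin d, fderiv ℝ (fun y => ⟪EuclideanSpace.single j (1:ℝ), w y⟫) x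
      (EuclideanSpace.single j 1) := by
  unfold sdiv
  rw [LEB.trace_eq_sum]
  congr 1
  ext j
  rw [LEB.coord_eq_inner (fderiv ℝ w x (EuclideanSpace.single j 1)) j,
    LEB.inner_fderiv_swap _ w x _ hw]

lemma LEB.inner_sdivOp (A : E → (E →L[ℝ] E)) (x : E) (v : E)
    (hAe : ∀ c : E, DifferentiableAt ℝ (fun y => A y c) x)
    (hadj : DifferentiableAt ℝ (fun y => ContinuousLinearMap.adjoint (A y) v) x) :
    ⟪v, sdivOp A x⟫ = sdiv (fun y => ContinuousLinearMap.adjoint (A y) v) x := by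
  rw [LEB.sdiv_eq_sum_fderiv_inner _ x hadj]
  unfold sdivOp
  rw [inner_sum]
  congr 1
  ext j
  rw [LEB.inner_fderiv_swap _ _ x _ (hAe _)]
  have : (fun y => ⟪EuclideanSpace.single j (1:ℝ), ContinuousLinearMap.adjoint (A y) v⟫)
      = fun y => ⟪v, A y (EuclideanSpace.single j 1)⟫ := by
    funext y
    rw [real_inner_comm, ContinuousLinearMap.adjoint_inner_left]
  rw [this]

end Helpers

set_option maxHeartbeats 4000000 in
/-- Lemma 3.4: the local energy balance of the diffuse-interface level-set model for the
incompressible two-phase Navier–Stokes equations with surface tension. -/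
theorem local_energy_balance_level_set
    (d : ℕ) (hd : 1 ≤ d)
    (Re We Fr ε : ℝ) (hRe : 0 < Re) (hWe : 0 < We) (hFr : 0 < Fr) (hε : 0 < ε)
    (ρ₁ ρ₂ μ₁ μ₂ : ℝ) (hρ₁ : 0 < ρ₁) (hρ₂ : 0 < ρ₂) (hμ₁ : 0 < μ₁) (hμ₂ : 0 < μ₂)
    (jvec : EuclideanSpace ℝ (Fin d)) (hjvec : ‖jvec‖ = 1)
    (H : ℝ → ℝ) (hH : ContDiff ℝ (⊤ : ℕ∞) H) (δ : ℝ → ℝ) (hδ : δ = deriv H)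
    (u : ℝ × EuclideanSpace ℝ (Fin d) → EuclideanSpace ℝ (Fin d))
    (p φ : ℝ × EuclideanSpace ℝ (Fin d) → ℝ)
    (hu : ContDiff ℝ (⊤ : ℕ∞) u) (hp : ContDiff ℝ (⊤ : ℕ∞) p) (hφ : ContDiff ℝ (⊤ : ℕ∞) φ)
    -- derived fields
    (ρ μ : ℝ × EuclideanSpace ℝ (Fin d) → ℝ)
    (hρ : ∀ t x, ρ (t, x) = ρ₁ * H (φ (t, x)) + ρ₂ * (1 - H (φ (t, x))))
    (hμ : ∀ t x, μ (t, x) = μ₁ * H (φ (t, x)) + μ₂ * (1 - H (φ (t, x))))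
    (η : ℝ × EuclideanSpace ℝ (Fin d) → ℝ)
    (hη : ∀ t x, η (t, x) = Real.sqrt (‖sgrad (fun y => φ (t, y)) x‖ ^ 2 + ε ^ 2))
    (ν : ℝ × EuclideanSpace ℝ (Fin d) → EuclideanSpace ℝ (Fin d))
    (hν : ∀ t x, ν (t, x) = (η (t, x))⁻¹ • sgrad (fun y => φ (t, y)) x)
    (κ : ℝ × EuclideanSpace ℝ (Fin d) → ℝ)
    (hκ : ∀ t x, κ (t, x) = sdiv (fun y => ν (t, y)) x)
    (δΓ : ℝ × EuclideanSpace ℝ (Fin d) → ℝ)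
    (hδΓ : ∀ t x, δΓ (t, x) = δ (φ (t, x)) * η (t, x))
    (P_T : ℝ × EuclideanSpace ℝ (Fin d) →
      (EuclideanSpace ℝ (Fin d) →L[ℝ] EuclideanSpace ℝ (Fin d)))
    (hPT : ∀ t x b, P_T (t, x) b = b - ⟪ν (t, x), b⟫ • ν (t, x))
    (τ : ℝ × EuclideanSpace ℝ (Fin d) →
      (EuclideanSpace ℝ (Fin d) →L[ℝ] EuclideanSpace ℝ (Fin d)))
    (hτ : ∀ t x, τ (t, x) = (μ (t, x) / Re) •
        (fderiv ℝ (fun y => u (t, y)) x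
          + ContinuousLinearMap.adjoint (fderiv ℝ (fun y => u (t, y)) x)))
    -- governing equations
    (hdiv : ∀ t x, sdiv (fun y => u (t, y)) x = 0)
    (hls : ∀ t x, deriv (fun s => φ (s, x)) t
        + ⟪u (t, x), sgrad (fun y => φ (t, y)) x⟫ = 0)
    (hmom : ∀ t x,
      deriv (fun s => ρ (s, x) • u (s, x)) t
        + sdivOp (fun y => ρ (t, y) • ((innerSL ℝ (u (t, y))).smulRight (u (t, y)))) x
        - sdivOp (fun y => τ (t, y)) x
        + sgrad (fun y => p (t, y)) x
        + ((1 / We) * (δΓ (t, x) * κ (t, x))) • ν (t, x)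
        + ((1 / Fr ^ 2) * ρ (t, x)) • jvec = 0)
    -- local energy
    (𝓗 : ℝ × EuclideanSpace ℝ (Fin d) → ℝ)
    (h𝓗 : ∀ t x, 𝓗 (t, x) = (1 / 2) * ρ (t, x) * ‖u (t, x)‖ ^ 2
        + (1 / Fr ^ 2) * ρ (t, x) * ⟪x, jvec⟫ + (1 / We) * δΓ (t, x)) :
    ∀ t x,
      deriv (fun s => 𝓗 (s, x)) t
        + sdiv (fun y =>
            (𝓗 (t, y) + p (t, y)) • u (t, y) - (τ (t, y)) (u (t, y))
              - ((1 / We) * δΓ (t, y)) • (P_T (t, y)) (u (t, y))) x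
        + LinearMap.trace ℝ (EuclideanSpace ℝ (Fin d))
            (((τ (t, x)).comp (fderiv ℝ (fun y => u (t, y)) x)) : _ →ₗ[ℝ] _)
        + (ε ^ 2 / We) * deriv δ (φ (t, x)) * ⟪u (t, x), ν (t, x)⟫ = 0 := by
  intro t x
  have hφd : Differentiable ℝ φ := hφ.differentiable (by simp)
  have hud : Differentiable ℝ u := hu.differentiable (by simp)
  have hpd : Differentiable ℝ p := hp.differentiable (by simp)
  have hHd : Differentiable ℝ H := hH.differentiable (by simp)
  have hδC : ContDiff ℝ (⊤ : ℕ∞) δ := by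
    rw [hδ]
    exact (hH.fderiv_right (by simp)).clm_apply contDiff_const
  have hδd : Differentiable ℝ δ := hδC.differentiable (by simp)
  -- z-level spatial gradient field
  set Gz : ℝ × EuclideanSpace ℝ (Fin d) → EuclideanSpace ℝ (Fin d) :=
    fun w => (InnerProductSpace.toDual ℝ (EuclideanSpace ℝ (Fin d))).symm
      ((fderiv ℝ φ w).comp (ContinuousLinearMap.inr ℝ ℝ (EuclideanSpace ℝ (Fin d))))
      with hGz_def
  have hGz_inner : ∀ (w : ℝ × EuclideanSpace ℝ (Fin d)) (v : EuclideanSpace ℝ (Fin d)),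
      ⟪Gz w, v⟫ = fderiv ℝ φ w (0, v) := by
    intro w v
    simp only [hGz_def]
    rw [InnerProductSpace.toDual_symm_apply]
    rfl
  have hsgrad : ∀ (s : ℝ) (y : EuclideanSpace ℝ (Fin d)),
      sgrad (fun y' => φ (s, y')) y = Gz (s, y) := by
    intro s y
    simp only [hGz_def, sgrad, gradient]
    rw [LEB.fderiv_slice φ s y (hφd _)]
  have hGzC : ContDiff ℝ (⊤ : ℕ∞) Gz := by
    have h1 : ContDiff ℝ (⊤ : ℕ∞) (fderiv ℝ φ) := hφ.fderiv_right (by simp)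
    have h2 : IsBoundedLinearMap ℝ
        (fun B : (ℝ × EuclideanSpace ℝ (Fin d)) →L[ℝ] ℝ =>
          (InnerProductSpace.toDual ℝ (EuclideanSpace ℝ (Fin d))).symm
            (B.comp (ContinuousLinearMap.inr ℝ ℝ (EuclideanSpace ℝ (Fin d))))) := by
      refine ⟨⟨fun a b => ?_, fun c a => ?_⟩,
        ‖(ContinuousLinearMap.inr ℝ ℝ (EuclideanSpace ℝ (Fin d)))‖ + 1, by positivity,
        fun B => ?_⟩
      · rw [ContinuousLinearMap.add_comp, map_add]
      · rw [ContinuousLinearMap.smul_comp, map_smulₛₗ]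
        simp
      · rw [LinearIsometryEquiv.norm_map]
        calc ‖B.comp (ContinuousLinearMap.inr ℝ ℝ (EuclideanSpace ℝ (Fin d)))‖
            ≤ ‖B‖ * ‖(ContinuousLinearMap.inr ℝ ℝ (EuclideanSpace ℝ (Fin d)))‖ :=
              ContinuousLinearMap.opNorm_comp_le _ _
          _ ≤ (‖(ContinuousLinearMap.inr ℝ ℝ (EuclideanSpace ℝ (Fin d)))‖ + 1) * ‖B‖ := by
              nlinarith [norm_nonneg B,
                norm_nonneg (ContinuousLinearMap.inr ℝ ℝ (EuclideanSpace ℝ (Fin d)))]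
    exact h2.contDiff.comp h1
  set ψz : ℝ × EuclideanSpace ℝ (Fin d) → ℝ := fun w => fderiv ℝ φ w (1, 0) with hψz_def
  have hψzC : ContDiff ℝ (⊤ : ℕ∞) ψz := (hφ.fderiv_right (by simp)).clm_apply contDiff_const
  have hψzd : Differentiable ℝ ψz := hψzC.differentiable (by simp)
  have hψ_sect : ∀ (s : ℝ) (y : EuclideanSpace ℝ (Fin d)), deriv (fun s' => φ (s', y)) s = ψz (s, y) := fun s y =>
    LEB.deriv_sect φ s y (hφd _)
  set ηz : ℝ × EuclideanSpace ℝ (Fin d) → ℝ := fun w => Real.sqrt (⟪Gz w, Gz w⟫ + ε ^ 2) with hηz_def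
  have hQpos : ∀ w, 0 < ⟪Gz w, Gz w⟫ + ε ^ 2 := fun w => by
    have h0 : (0:ℝ) ≤ ⟪Gz w, Gz w⟫ := real_inner_self_nonneg
    positivity
  have hηpos : ∀ w, 0 < ηz w := fun w => Real.sqrt_pos.2 (hQpos w)
  have hηsq : ∀ w, ηz w ^ 2 = ⟪Gz w, Gz w⟫ + ε ^ 2 := fun w => Real.sq_sqrt (hQpos w).le
  have hη' : ∀ (s : ℝ) (y : EuclideanSpace ℝ (Fin d)), η (s, y) = ηz (s, y) := by
    intro s y
    rw [hη s y, hsgrad s y]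
    simp only [hηz_def]
    rw [real_inner_self_eq_norm_sq]
  have hηzC : ContDiff ℝ (⊤ : ℕ∞) ηz := by
    rw [contDiff_iff_contDiffAt]
    intro w
    exact (Real.contDiffAt_sqrt (hQpos w).ne').comp w
      (((hGzC.inner ℝ hGzC).add contDiff_const).contDiffAt)
  set νz : ℝ × EuclideanSpace ℝ (Fin d) → EuclideanSpace ℝ (Fin d) := fun w => (ηz w)⁻¹ • Gz w with hνz_def
  have hνzC : ContDiff ℝ (⊤ : ℕ∞) νz := (hηzC.inv (fun w => (hηpos w).ne')).smul hGzC
  have hν' : ∀ (s : ℝ) (y : EuclideanSpace ℝ (Fin d)), ν (s, y) = νz (s, y) := fun s y => by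
    rw [hν s y, hη' s y, hsgrad s y]
  set ρz : ℝ × EuclideanSpace ℝ (Fin d) → ℝ := fun w => ρ₁ * H (φ w) + ρ₂ * (1 - H (φ w)) with hρz_def
  have hρzC : ContDiff ℝ (⊤ : ℕ∞) ρz :=
    (contDiff_const.mul (hH.comp hφ)).add
      (contDiff_const.mul (contDiff_const.sub (hH.comp hφ)))
  have hρ' : ∀ (s : ℝ) (y : EuclideanSpace ℝ (Fin d)), ρ (s, y) = ρz (s, y) := fun s y => hρ s y
  set μz : ℝ × EuclideanSpace ℝ (Fin d) → ℝ := fun w => μ₁ * H (φ w) + μ₂ * (1 - H (φ w)) with hμz_def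
  have hμzC : ContDiff ℝ (⊤ : ℕ∞) μz :=
    (contDiff_const.mul (hH.comp hφ)).add
      (contDiff_const.mul (contDiff_const.sub (hH.comp hφ)))
  have hμ' : ∀ (s : ℝ) (y : EuclideanSpace ℝ (Fin d)), μ (s, y) = μz (s, y) := fun s y => hμ s y
  set Jz : ℝ × EuclideanSpace ℝ (Fin d) → (EuclideanSpace ℝ (Fin d) →L[ℝ] EuclideanSpace ℝ (Fin d)) :=
    fun w => (fderiv ℝ u w).comp (ContinuousLinearMap.inr ℝ ℝ (EuclideanSpace ℝ (Fin d))) with hJz_def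
  have hJz_slice : ∀ (s : ℝ) (y : EuclideanSpace ℝ (Fin d)), fderiv ℝ (fun y' => u (s, y')) y = Jz (s, y) :=
    fun s y => LEB.fderiv_slice u s y (hud _)
  have hJzC : ContDiff ℝ (⊤ : ℕ∞) Jz := by
    have h2 : IsBoundedLinearMap ℝ
        (fun B : (ℝ × EuclideanSpace ℝ (Fin d)) →L[ℝ] EuclideanSpace ℝ (Fin d) => B.comp (ContinuousLinearMap.inr ℝ ℝ (EuclideanSpace ℝ (Fin d)))) := by
      refine ⟨⟨fun a b => ?_, fun c a => ?_⟩,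
        ‖(ContinuousLinearMap.inr ℝ ℝ (EuclideanSpace ℝ (Fin d)))‖ + 1, by positivity, fun B => ?_⟩
      · rw [ContinuousLinearMap.add_comp]
      · rw [ContinuousLinearMap.smul_comp]
      · calc ‖B.comp (ContinuousLinearMap.inr ℝ ℝ (EuclideanSpace ℝ (Fin d)))‖
            ≤ ‖B‖ * ‖(ContinuousLinearMap.inr ℝ ℝ (EuclideanSpace ℝ (Fin d)))‖ :=
              ContinuousLinearMap.opNorm_comp_le _ _
          _ ≤ (‖(ContinuousLinearMap.inr ℝ ℝ (EuclideanSpace ℝ (Fin d)))‖ + 1) * ‖B‖ := by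
              nlinarith [norm_nonneg B, norm_nonneg (ContinuousLinearMap.inr ℝ ℝ (EuclideanSpace ℝ (Fin d)))]
    exact h2.contDiff.comp (hu.fderiv_right (by simp))
  set τz : ℝ × EuclideanSpace ℝ (Fin d) → (EuclideanSpace ℝ (Fin d) →L[ℝ] EuclideanSpace ℝ (Fin d)) :=
    fun w => (μz w / Re) • (Jz w + ContinuousLinearMap.adjoint (Jz w)) with hτz_def
  have hτzC : ContDiff ℝ (⊤ : ℕ∞) τz :=
    (hμzC.div_const Re).smul (hJzC.add (LEB.contDiff_adjoint.comp hJzC))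
  have hτ' : ∀ (s : ℝ) (y : EuclideanSpace ℝ (Fin d)), τ (s, y) = τz (s, y) := by
    intro s y
    rw [hτ s y, hμ s y, hJz_slice s y]
  have hτsym : ∀ w, ContinuousLinearMap.adjoint (τz w) = τz w := by
    intro w
    simp only [hτz_def]
    have h1 : ContinuousLinearMap.adjoint ((μz w / Re) •
        (Jz w + ContinuousLinearMap.adjoint (Jz w)))
        = (μz w / Re) • ContinuousLinearMap.adjoint
            (Jz w + ContinuousLinearMap.adjoint (Jz w)) := by simp
    rw [h1, map_add, ContinuousLinearMap.adjoint_adjoint, add_comm]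
  have hlsz : ∀ (s : ℝ) (y : EuclideanSpace ℝ (Fin d)), ψz (s, y) = -⟪u (s, y), Gz (s, y)⟫ := by
    intro s y
    have h0 := hls s y
    rw [hψ_sect s y, hsgrad s y] at h0
    linarith
  -- pointwise facts at (t, x)
  have hgU1 : ⟪Gz (t, x), u (t, x)⟫ = fderiv ℝ φ (t, x) (0, u (t, x)) := hGz_inner (t, x) _
  have hgU2 : ⟪u (t, x), Gz (t, x)⟫ = fderiv ℝ φ (t, x) (0, u (t, x)) := by
    rw [real_inner_comm]; exact hgU1
  have hgg : ⟪Gz (t, x), Gz (t, x)⟫ = fderiv ℝ φ (t, x) (0, Gz (t, x)) := hGz_inner (t, x) _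
  have hesq : ηz (t, x) ^ 2 = ⟪Gz (t, x), Gz (t, x)⟫ + ε ^ 2 := hηsq (t, x)
  have hene : ηz (t, x) ≠ 0 := (hηpos (t, x)).ne'
  have hlsv : ψz (t, x) = -(fderiv ℝ φ (t, x) (0, u (t, x))) := by
    have h0 := hlsz t x
    rw [hgU2] at h0
    exact h0
  have hC : ⟪Gz (t, x), fderiv ℝ Gz (t, x) (1, 0)⟫ = fderiv ℝ ψz (t, x) (0, Gz (t, x)) := by
    have h1 : ⟪Gz (t, x), fderiv ℝ Gz (t, x) (1, 0)⟫
        = fderiv ℝ (fun w => ⟪Gz (t, x), Gz w⟫) (t, x) (1, 0) :=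
      LEB.inner_fderiv_swap _ Gz (t, x) (1, 0) ((hGzC.differentiable (by simp)) _)
    have h2 : (fun w => ⟪Gz (t, x), Gz w⟫) = fun w => fderiv ℝ φ w (0, Gz (t, x)) := by
      funext w
      rw [real_inner_comm]
      exact hGz_inner w _
    rw [h1, h2, LEB.clairaut φ hφ (t, x) (0, Gz (t, x)) (1, 0)]
  -- time derivative chain
  have hφt : HasDerivAt (fun s => φ (s, x)) (ψz (t, x)) t :=
    LEB.hasDerivAt_sect φ t x (hφd _)
  have hut : HasDerivAt (fun s => u (s, x)) (fderiv ℝ u (t, x) (1, 0)) t :=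
    LEB.hasDerivAt_sect u t x (hud _)
  have hGt : HasDerivAt (fun s => Gz (s, x)) (fderiv ℝ Gz (t, x) (1, 0)) t :=
    LEB.hasDerivAt_sect Gz t x ((hGzC.differentiable (by simp)) _)
  have hHt : HasDerivAt (fun s => H (φ (s, x))) (δ (φ (t, x)) * ψz (t, x)) t := by
    have h := (hHd (φ (t, x))).hasDerivAt.comp t hφt
    rw [show deriv H (φ (t, x)) = δ (φ (t, x)) from (by rw [hδ])] at h
    simpa [Function.comp_def] using h
  have hρt : HasDerivAt (fun s => ρz (s, x)) ((ρ₁ - ρ₂) * (δ (φ (t, x)) * ψz (t, x))) t := by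
    have h : HasDerivAt (fun s => ρ₁ * H (φ (s, x)) + ρ₂ * (1 - H (φ (s, x))))
        (ρ₁ * (δ (φ (t, x)) * ψz (t, x)) + ρ₂ * (0 - δ (φ (t, x)) * ψz (t, x))) t :=
      (hHt.const_mul ρ₁).add (((hasDerivAt_const t (1:ℝ)).sub hHt).const_mul ρ₂)
    have hval : (ρ₁ - ρ₂) * (δ (φ (t, x)) * ψz (t, x))
        = ρ₁ * (δ (φ (t, x)) * ψz (t, x)) + ρ₂ * (0 - δ (φ (t, x)) * ψz (t, x)) := by ring
    rw [hval]
    exact h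
  have hδφt : HasDerivAt (fun s => δ (φ (s, x))) (deriv δ (φ (t, x)) * ψz (t, x)) t := by
    have h := (hδd (φ (t, x))).hasDerivAt.comp t hφt
    simpa [Function.comp_def] using h
  have huut : HasDerivAt (fun s => ⟪u (s, x), u (s, x)⟫)
      (⟪u (t, x), fderiv ℝ u (t, x) (1, 0)⟫ + ⟪fderiv ℝ u (t, x) (1, 0), u (t, x)⟫) t :=
    hut.inner ℝ hut
  have hQt : HasDerivAt (fun s => ⟪Gz (s, x), Gz (s, x)⟫ + ε ^ 2)
      (⟪Gz (t, x), fderiv ℝ Gz (t, x) (1, 0)⟫ + ⟪fderiv ℝ Gz (t, x) (1, 0), Gz (t, x)⟫) t :=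
    (hGt.inner ℝ hGt).add_const _
  have hηt : HasDerivAt (fun s => ηz (s, x))
      ((⟪Gz (t, x), fderiv ℝ Gz (t, x) (1, 0)⟫ + ⟪fderiv ℝ Gz (t, x) (1, 0), Gz (t, x)⟫)
        / (2 * ηz (t, x))) t := by
    have h := hQt.sqrt (hQpos (t, x)).ne'
    exact h
  have hδΓt : HasDerivAt (fun s => δ (φ (s, x)) * ηz (s, x))
      (deriv δ (φ (t, x)) * ψz (t, x) * ηz (t, x) + δ (φ (t, x)) *
        ((⟪Gz (t, x), fderiv ℝ Gz (t, x) (1, 0)⟫ + ⟪fderiv ℝ Gz (t, x) (1, 0), Gz (t, x)⟫)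
          / (2 * ηz (t, x)))) t := hδφt.mul hηt
  have hE1fun : (fun s => 𝓗 (s, x)) = fun s =>
      (1 / 2) * ρz (s, x) * ⟪u (s, x), u (s, x)⟫
      + (1 / Fr ^ 2) * ρz (s, x) * ⟪x, jvec⟫
      + (1 / We) * (δ (φ (s, x)) * ηz (s, x)) := by
    funext s
    rw [h𝓗 s x, hδΓ s x, hη' s x, hρ' s x, real_inner_self_eq_norm_sq]
  have hE1 : deriv (fun s => 𝓗 (s, x)) t
      = ((1 / 2) * ((ρ₁ - ρ₂) * (δ (φ (t, x)) * ψz (t, x))) * ⟪u (t, x), u (t, x)⟫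
          + (1 / 2) * ρz (t, x) *
            (⟪u (t, x), fderiv ℝ u (t, x) (1, 0)⟫ + ⟪fderiv ℝ u (t, x) (1, 0), u (t, x)⟫))
        + ((1 / Fr ^ 2) * ((ρ₁ - ρ₂) * (δ (φ (t, x)) * ψz (t, x))) * ⟪x, jvec⟫)
        + (1 / We) * (deriv δ (φ (t, x)) * ψz (t, x) * ηz (t, x) + δ (φ (t, x)) *
            ((⟪Gz (t, x), fderiv ℝ Gz (t, x) (1, 0)⟫
              + ⟪fderiv ℝ Gz (t, x) (1, 0), Gz (t, x)⟫) / (2 * ηz (t, x)))) := by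
    rw [hE1fun]
    have h := ((((hρt.const_mul ((1:ℝ) / 2)).fun_mul huut).fun_add
      ((hρt.const_mul ((1:ℝ) / Fr ^ 2)).mul_const ⟪x, jvec⟫)).fun_add
      (hδΓt.const_mul ((1:ℝ) / We))).deriv
    rw [h]
  -- spatial derivative facts at (t, x)
  have husd : DifferentiableAt ℝ (fun y => u (t, y)) x :=
    (LEB.hasFDerivAt_slice u t x (hud _)).differentiableAt
  have hus : HasFDerivAt (fun y => u (t, y)) (fderiv ℝ (fun y => u (t, y)) x) x :=
    husd.hasFDerivAt
  have hφs : HasFDerivAt (fun y => φ (t, y))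
      ((fderiv ℝ φ (t, x)).comp (ContinuousLinearMap.inr ℝ ℝ (EuclideanSpace ℝ (Fin d)))) x :=
    LEB.hasFDerivAt_slice φ t x (hφd _)
  have hHs : HasFDerivAt (fun y => H (φ (t, y)))
      (δ (φ (t, x)) •
        ((fderiv ℝ φ (t, x)).comp (ContinuousLinearMap.inr ℝ ℝ (EuclideanSpace ℝ (Fin d))))) x := by
    have h := (hHd (φ (t, x))).hasDerivAt.comp_hasFDerivAt x hφs
    rw [show deriv H (φ (t, x)) = δ (φ (t, x)) from (by rw [hδ])] at h
    exact h
  have hρs : HasFDerivAt (fun y => ρz (t, y))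
      (((ρ₁ - ρ₂) * δ (φ (t, x))) •
        ((fderiv ℝ φ (t, x)).comp (ContinuousLinearMap.inr ℝ ℝ (EuclideanSpace ℝ (Fin d))))) x := by
    have h := (hHs.const_mul ρ₁).fun_add (((hasFDerivAt_const (1:ℝ) x).fun_sub hHs).const_mul ρ₂)
    refine h.congr_fderiv ?_
    rw [zero_sub, smul_neg, smul_smul, smul_smul, ← sub_eq_add_neg, ← sub_smul, sub_mul]
  have hδs : HasFDerivAt (fun y => δ (φ (t, y)))
      (deriv δ (φ (t, x)) •
        ((fderiv ℝ φ (t, x)).comp (ContinuousLinearMap.inr ℝ ℝ (EuclideanSpace ℝ (Fin d))))) x :=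
    (hδd (φ (t, x))).hasDerivAt.comp_hasFDerivAt x hφs
  have hψs : HasFDerivAt (fun y => ψz (t, y))
      ((fderiv ℝ ψz (t, x)).comp (ContinuousLinearMap.inr ℝ ℝ (EuclideanSpace ℝ (Fin d)))) x :=
    LEB.hasFDerivAt_slice ψz t x (hψzd _)
  have hps : HasFDerivAt (fun y => p (t, y))
      ((fderiv ℝ p (t, x)).comp (ContinuousLinearMap.inr ℝ ℝ (EuclideanSpace ℝ (Fin d)))) x :=
    LEB.hasFDerivAt_slice p t x (hpd _)
  have hνsd : DifferentiableAt ℝ (fun y => νz (t, y)) x :=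
    ((LEB.contDiff_slice νz t hνzC).differentiable (by simp)) x
  have hτsd : DifferentiableAt ℝ (fun y => τz (t, y)) x :=
    ((LEB.contDiff_slice τz t hτzC).differentiable (by simp)) x
  -- momentum equation components
  have hm1 : deriv (fun s => ρ (s, x) • u (s, x)) t
      = ρz (t, x) • fderiv ℝ u (t, x) (1, 0)
        + ((ρ₁ - ρ₂) * (δ (φ (t, x)) * ψz (t, x))) • u (t, x) := by
    have hfun : (fun s => ρ (s, x) • u (s, x)) = fun s => ρz (s, x) • u (s, x) :=
      funext fun s => by rw [hρ' s x]
    rw [hfun, (hρt.fun_smul hut).deriv]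
  have hτf_eq : (fun y => τ (t, y)) = fun y => τz (t, y) := funext fun y => hτ' t y
  have hm3a : ⟪u (t, x), sdivOp (fun y => τ (t, y)) x⟫
      = sdiv (fun y => τz (t, y) (u (t, x))) x := by
    rw [hτf_eq]
    have hadjeq : (fun y => ContinuousLinearMap.adjoint (τz (t, y)) (u (t, x)))
        = fun y => τz (t, y) (u (t, x)) := funext fun y => by rw [hτsym (t, y)]
    rw [LEB.inner_sdivOp _ x _ (fun c => hτsd.clm_apply (differentiableAt_const c))
      (by rw [hadjeq]; exact hτsd.clm_apply (differentiableAt_const _))]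
    congr 1
  have hm3b : sdiv (fun y => τz (t, y) (u (t, y))) x
      = LinearMap.trace ℝ (EuclideanSpace ℝ (Fin d))
          (((τz (t, x)).comp (fderiv ℝ (fun y => u (t, y)) x)) : _ →ₗ[ℝ] _)
        + sdiv (fun y => τz (t, y) (u (t, x))) x :=
    LEB.sdiv_clm_apply _ _ x hτsd husd
  have hm4 : ⟪u (t, x), sgrad (fun y => p (t, y)) x⟫ = fderiv ℝ p (t, x) (0, u (t, x)) := by
    rw [real_inner_comm]
    have h1 : ⟪sgrad (fun y => p (t, y)) x, u (t, x)⟫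
        = fderiv ℝ (fun y => p (t, y)) x (u (t, x)) :=
      LEB.inner_gradient (fun y => p (t, y)) x (u (t, x))
    rw [h1, hps.fderiv]
    rfl
  have hm5 : ⟪u (t, x), ((1 / We) * (δΓ (t, x) * κ (t, x))) • ν (t, x)⟫
      = (1 / We) * (δ (φ (t, x)) * ηz (t, x) * sdiv (fun y => νz (t, y)) x)
        * ((ηz (t, x))⁻¹ * fderiv ℝ φ (t, x) (0, u (t, x))) := by
    rw [hδΓ t x, hη' t x, hν' t x, hκ t x,
      show (fun y => ν (t, y)) = fun y => νz (t, y) from funext fun y => hν' t y,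
      real_inner_smul_right]
    simp only [hνz_def]
    rw [real_inner_smul_right, hgU2]
  have hm6 : ⟪u (t, x), ((1 / Fr ^ 2) * ρ (t, x)) • jvec⟫
      = (1 / Fr ^ 2) * ρz (t, x) * ⟪u (t, x), jvec⟫ := by
    rw [hρ' t x, real_inner_smul_right]
  have hconv_eq : (fun y => ρ (t, y) • ((innerSL ℝ (u (t, y))).smulRight (u (t, y))))
      = fun y => ρz (t, y) • ((innerSL ℝ (u (t, y))).smulRight (u (t, y))) :=
    funext fun y => by rw [hρ' t y]
  have hconv_adj : (fun y => ContinuousLinearMap.adjoint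
        (ρz (t, y) • ((innerSL ℝ (u (t, y))).smulRight (u (t, y)))) (u (t, x)))
      = fun y => (ρz (t, y) * ⟪u (t, y), u (t, x)⟫) • u (t, y) := by
    funext y
    have h1 : ContinuousLinearMap.adjoint
          (ρz (t, y) • ((innerSL ℝ (u (t, y))).smulRight (u (t, y))))
        = ρz (t, y) • ContinuousLinearMap.adjoint
            ((innerSL ℝ (u (t, y))).smulRight (u (t, y))) := by
      simp
    rw [h1, LEB.adjoint_rankOne]
    simp [smul_smul]
  have hm2 : ⟪u (t, x),
        sdivOp (fun y => ρ (t, y) • ((innerSL ℝ (u (t, y))).smulRight (u (t, y)))) x⟫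
      = fderiv ℝ (fun y => ρz (t, y) * ⟪u (t, y), u (t, x)⟫) x (u (t, x)) := by
    rw [hconv_eq]
    have hAe : ∀ c, DifferentiableAt ℝ
        (fun y => (ρz (t, y) • ((innerSL ℝ (u (t, y))).smulRight (u (t, y)))) c) x := by
      intro c
      have heq : (fun y => (ρz (t, y) • ((innerSL ℝ (u (t, y))).smulRight (u (t, y)))) c)
          = fun y => (ρz (t, y) * ⟪u (t, y), c⟫) • u (t, y) := by
        funext y; simp [smul_smul]
      rw [heq]
      exact (hρs.differentiableAt.mul (husd.inner ℝ (differentiableAt_const c))).smul husd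
    have hadj : DifferentiableAt ℝ (fun y => ContinuousLinearMap.adjoint
        (ρz (t, y) • ((innerSL ℝ (u (t, y))).smulRight (u (t, y)))) (u (t, x))) x := by
      rw [hconv_adj]
      exact (hρs.differentiableAt.mul (husd.inner ℝ (differentiableAt_const _))).smul husd
    rw [LEB.inner_sdivOp _ x _ hAe hadj, hconv_adj,
      LEB.sdiv_smulfield _ _ x
        (hρs.differentiableAt.fun_mul (husd.inner ℝ (differentiableAt_const _))) husd,
      hdiv t x]
    ring
  have hm2v : fderiv ℝ (fun y => ρz (t, y) * ⟪u (t, y), u (t, x)⟫) x (u (t, x))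
      = ρz (t, x) * ⟪fderiv ℝ (fun y => u (t, y)) x (u (t, x)), u (t, x)⟫
        + ((ρ₁ - ρ₂) * δ (φ (t, x))) * fderiv ℝ φ (t, x) (0, u (t, x))
          * ⟪u (t, x), u (t, x)⟫ := by
    have h := (hρs.fun_mul (hus.inner ℝ (hasFDerivAt_const (u (t, x)) x))).fderiv
    rw [h]
    simp only [ContinuousLinearMap.add_apply, ContinuousLinearMap.coe_smul', Pi.smul_apply,
      ContinuousLinearMap.coe_comp', Function.comp_apply, ContinuousLinearMap.inr_apply,
      fderivInnerCLM_apply, ContinuousLinearMap.prod_apply, ContinuousLinearMap.zero_apply,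
      smul_eq_mul, inner_zero_right]
    ring
  -- the flux divergence
  have hflux : (fun y => (𝓗 (t, y) + p (t, y)) • u (t, y) - (τ (t, y)) (u (t, y))
        - ((1 / We) * δΓ (t, y)) • (P_T (t, y)) (u (t, y)))
      = fun y => (((1 / 2) * ρz (t, y) * ⟪u (t, y), u (t, y)⟫
          + (1 / Fr ^ 2) * ρz (t, y) * ⟪y, jvec⟫ + p (t, y)) • u (t, y)
          - τz (t, y) (u (t, y)))
        + (-((1 / We) * (δ (φ (t, y)) * ψz (t, y)))) • νz (t, y) := by
    funext y
    rw [h𝓗 t y, hPT t y (u (t, y)), hδΓ t y, hη' t y, hρ' t y, hν' t y, hτ' t y,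
      real_inner_self_eq_norm_sq]
    have hc : ((1 / We) * (δ (φ (t, y)) * ηz (t, y))) * ⟪νz (t, y), u (t, y)⟫
        = -((1 / We) * (δ (φ (t, y)) * ψz (t, y))) := by
      simp only [hνz_def]
      rw [real_inner_smul_left]
      have h2 : ⟪Gz (t, y), u (t, y)⟫ = -ψz (t, y) := by
        rw [hlsz t y, real_inner_comm]
        ring
      rw [h2]
      field_simp [(hηpos (t, y)).ne']
    have hkey : ((1 / We) * (δ (φ (t, y)) * ηz (t, y))) • (⟪νz (t, y), u (t, y)⟫ • νz (t, y))
        = (-((1 / We) * (δ (φ (t, y)) * ψz (t, y)))) • νz (t, y) := by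
      rw [smul_smul, hc]
    rw [smul_sub, hkey]
    module
  have hXd : DifferentiableAt ℝ (fun y => (1 / 2) * ρz (t, y) * ⟪u (t, y), u (t, y)⟫
      + (1 / Fr ^ 2) * ρz (t, y) * ⟪y, jvec⟫ + p (t, y)) x := by
    refine DifferentiableAt.add (DifferentiableAt.add ?_ ?_) hps.differentiableAt
    · exact ((differentiableAt_const _).mul hρs.differentiableAt).mul (husd.inner ℝ husd)
    · exact ((differentiableAt_const _).mul hρs.differentiableAt).mul
        (differentiableAt_fun_id.inner ℝ (differentiableAt_const jvec))
  have hbd : DifferentiableAt ℝ (fun y => -((1 / We) * (δ (φ (t, y)) * ψz (t, y)))) x :=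
    (((hδs.differentiableAt.mul hψs.differentiableAt).const_mul _)).neg
  have hE2 : sdiv (fun y => (𝓗 (t, y) + p (t, y)) • u (t, y) - (τ (t, y)) (u (t, y))
        - ((1 / We) * δΓ (t, y)) • (P_T (t, y)) (u (t, y))) x
      = (fderiv ℝ (fun y => (1 / 2) * ρz (t, y) * ⟪u (t, y), u (t, y)⟫
            + (1 / Fr ^ 2) * ρz (t, y) * ⟪y, jvec⟫ + p (t, y)) x (u (t, x))
          - sdiv (fun y => τz (t, y) (u (t, y))) x)
        + (fderiv ℝ (fun y => -((1 / We) * (δ (φ (t, y)) * ψz (t, y)))) x (νz (t, x))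
            + (-((1 / We) * (δ (φ (t, x)) * ψz (t, x)))) * sdiv (fun y => νz (t, y)) x) := by
    rw [hflux]
    rw [LEB.sdiv_add _ _ x
      ((hXd.fun_smul husd).fun_sub (hτsd.clm_apply husd))
      (hbd.fun_smul hνsd)]
    rw [LEB.sdiv_sub _ _ x (hXd.fun_smul husd) (hτsd.clm_apply husd)]
    rw [LEB.sdiv_smulfield _ _ x hXd husd, hdiv t x]
    rw [LEB.sdiv_smulfield _ _ x hbd hνsd]
    ring
  -- values of the two scalar-field derivatives in the flux
  have hE2a : fderiv ℝ (fun y => (1 / 2) * ρz (t, y) * ⟪u (t, y), u (t, y)⟫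
        + (1 / Fr ^ 2) * ρz (t, y) * ⟪y, jvec⟫ + p (t, y)) x (u (t, x))
      = (1 / 2) * (((ρ₁ - ρ₂) * δ (φ (t, x))) * fderiv ℝ φ (t, x) (0, u (t, x)))
          * ⟪u (t, x), u (t, x)⟫
        + (1 / 2) * ρz (t, x) * (⟪u (t, x), fderiv ℝ (fun y => u (t, y)) x (u (t, x))⟫
            + ⟪fderiv ℝ (fun y => u (t, y)) x (u (t, x)), u (t, x)⟫)
        + (1 / Fr ^ 2) * (((ρ₁ - ρ₂) * δ (φ (t, x))) * fderiv ℝ φ (t, x) (0, u (t, x)))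
            * ⟪x, jvec⟫
        + (1 / Fr ^ 2) * ρz (t, x) * ⟪u (t, x), jvec⟫
        + fderiv ℝ p (t, x) (0, u (t, x)) := by
    have hyj : HasFDerivAt (fun y : EuclideanSpace ℝ (Fin d) => ⟪y, jvec⟫)
        ((fderivInnerCLM ℝ (x, jvec)).comp
          ((ContinuousLinearMap.id ℝ (EuclideanSpace ℝ (Fin d))).prod 0)) x :=
      (hasFDerivAt_id x).inner ℝ (hasFDerivAt_const jvec x)
    have h := ((((hρs.const_mul ((1:ℝ)/2)).fun_mul (hus.inner ℝ hus)).fun_add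
      ((hρs.const_mul ((1:ℝ)/Fr^2)).fun_mul hyj)).fun_add hps).fderiv
    rw [h]
    simp only [ContinuousLinearMap.add_apply, ContinuousLinearMap.coe_smul', Pi.smul_apply,
      ContinuousLinearMap.coe_comp', Function.comp_apply, ContinuousLinearMap.inr_apply,
      fderivInnerCLM_apply, ContinuousLinearMap.prod_apply, ContinuousLinearMap.zero_apply,
      ContinuousLinearMap.coe_id', id_eq, smul_eq_mul, inner_zero_right]
    ring
  have hE2b : fderiv ℝ (fun y => -((1 / We) * (δ (φ (t, y)) * ψz (t, y)))) x (νz (t, x))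
      = -((1 / We) * ((deriv δ (φ (t, x)) * fderiv ℝ φ (t, x) (0, νz (t, x))) * ψz (t, x)
          + δ (φ (t, x)) * fderiv ℝ ψz (t, x) (0, νz (t, x)))) := by
    have h := (((hδs.fun_mul hψs).const_mul ((1:ℝ)/We)).fun_neg.fderiv)
    rw [h]
    simp only [ContinuousLinearMap.neg_apply, ContinuousLinearMap.add_apply,
      ContinuousLinearMap.coe_smul', Pi.smul_apply, ContinuousLinearMap.coe_comp',
      Function.comp_apply, ContinuousLinearMap.inr_apply, smul_eq_mul]
    ring
  have hnu1 : fderiv ℝ φ (t, x) (0, νz (t, x))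
      = (ηz (t, x))⁻¹ * fderiv ℝ φ (t, x) (0, Gz (t, x)) := by
    have h1 : ((0 : ℝ), νz (t, x)) = (ηz (t, x))⁻¹ • ((0 : ℝ), Gz (t, x)) := by
      simp only [hνz_def]
      rw [Prod.smul_mk, smul_zero]
    rw [h1, map_smul, smul_eq_mul]
  have hnu2 : fderiv ℝ ψz (t, x) (0, νz (t, x))
      = (ηz (t, x))⁻¹ * fderiv ℝ ψz (t, x) (0, Gz (t, x)) := by
    have h1 : ((0 : ℝ), νz (t, x)) = (ηz (t, x))⁻¹ • ((0 : ℝ), Gz (t, x)) := by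
      simp only [hνz_def]
      rw [Prod.smul_mk, smul_zero]
    rw [h1, map_smul, smul_eq_mul]
  -- assembled momentum identity
  have hM : ⟪u (t, x), deriv (fun s => ρ (s, x) • u (s, x)) t⟫
      + ⟪u (t, x),
          sdivOp (fun y => ρ (t, y) • ((innerSL ℝ (u (t, y))).smulRight (u (t, y)))) x⟫
      - ⟪u (t, x), sdivOp (fun y => τ (t, y)) x⟫
      + ⟪u (t, x), sgrad (fun y => p (t, y)) x⟫
      + ⟪u (t, x), ((1 / We) * (δΓ (t, x) * κ (t, x))) • ν (t, x)⟫
      + ⟪u (t, x), ((1 / Fr ^ 2) * ρ (t, x)) • jvec⟫ = 0 := by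
    have h1 := congrArg (fun v => ⟪u (t, x), v⟫) (hmom t x)
    simpa only [inner_add_right, inner_sub_right, inner_zero_right] using h1
  rw [hm1, hm2, hm3a, hm4, hm5, hm6, hm2v] at hM
  simp only [inner_add_right, real_inner_smul_right] at hM
  have hm3b' : sdiv (fun y => τz (t, y) (u (t, x))) x
      = sdiv (fun y => τz (t, y) (u (t, y))) x
        - LinearMap.trace ℝ (EuclideanSpace ℝ (Fin d))
            (((τz (t, x)).comp (fderiv ℝ (fun y => u (t, y)) x)) : _ →ₗ[ℝ] _) := by
    rw [hm3b]; ring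
  rw [hm3b'] at hM
  -- rewrite the goal
  rw [hE1, hE2, hE2a, hE2b, hnu1, hnu2]
  rw [show τ (t, x) = τz (t, x) from hτ' t x]
  rw [hν' t x]
  rw [show ⟪u (t, x), νz (t, x)⟫ = (ηz (t, x))⁻¹ * fderiv ℝ φ (t, x) (0, u (t, x)) from by
    simp only [hνz_def]; rw [real_inner_smul_right, hgU2]]
  have hCc : ⟪fderiv ℝ Gz (t, x) (1, 0), Gz (t, x)⟫
      = fderiv ℝ ψz (t, x) (0, Gz (t, x)) := by rw [real_inner_comm]; exact hC
  rw [hC, hCc]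
  have hcomm1 : ⟪fderiv ℝ u (t, x) (1, 0), u (t, x)⟫
      = ⟪u (t, x), fderiv ℝ u (t, x) (1, 0)⟫ := real_inner_comm _ _
  have hcomm2 : ⟪fderiv ℝ (fun y => u (t, y)) x (u (t, x)), u (t, x)⟫
      = ⟪u (t, x), fderiv ℝ (fun y => u (t, y)) x (u (t, x))⟫ := real_inner_comm _ _
  simp only [hcomm1, hcomm2] at hM ⊢
  rw [hlsv] at hM ⊢
  have hesq2 : ηz (t, x) ^ 2 = fderiv ℝ φ (t, x) (0, Gz (t, x)) + ε ^ 2 := by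
    rw [hesq, hgg]
  have hinv : ηz (t, x) * (ηz (t, x))⁻¹ = 1 := mul_inv_cancel₀ hene
  linear_combination hM
    + (-(1 / We) * deriv δ (φ (t, x)) * fderiv ℝ φ (t, x) (0, u (t, x))
        * (ηz (t, x))⁻¹) * hesq2
    + ((1 / We) * deriv δ (φ (t, x)) * fderiv ℝ φ (t, x) (0, u (t, x)) * ηz (t, x)
        - (1 / We) * δ (φ (t, x)) * fderiv ℝ φ (t, x) (0, u (t, x))
          * sdiv (fun y => νz (t, y)) x) * hinv
end
end

section
/- Let P be a real polynomial with natDegree P ≤ 6. Then for all real a, b, with m := (a + b)/2: P(b) − P(a) = (b − a) · ( P'(m) + P'''(m)·(b − a)²/24 + P⁽⁵⁾(m)·(b − a)⁴/1920 ), where P', P''', P⁽⁵⁾ denote the first, third and fifth derivatives of P evaluated at m. -/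
/-!
Expand `P` in Taylor series about the midpoint `m` with step `h = (b - a) / 2`. In
`P (m + h) - P (m - h)` the even-order terms cancel and the odd-order ones double, and since
`deg P ≤ 6` only the orders 1, 3 and 5 survive; the factors `2 h^k / k!` for `k = 1, 3, 5` are
`(b - a)`, `(b - a)^3 / 24` and `(b - a)^5 / 1920`.
-/

open Polynomial Finset

theorem Finset.sum_range_two_mul {M : Type*} [AddCommMonoid M] (f : ℕ → M) (n : ℕ) :
    ∑ k ∈ range (2 * n), f k = ∑ k ∈ range n, (f (2 * k) + f (2 * k + 1)) := by
  induction n with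
  | zero => simp
  | succ n ih =>
    rw [mul_add, mul_one, sum_range_succ, sum_range_succ, sum_range_succ, ih, add_assoc]

namespace Polynomial

theorem eval_add_eq_sum_range_hasseDeriv {R : Type*} [CommSemiring R] {P : R[X]} {n : ℕ}
    (hP : P.natDegree < n) (x h : R) :
    P.eval (x + h) = ∑ k ∈ range n, (hasseDeriv k P).eval x * h ^ k := by
  rw [add_comm, ← taylor_eval, eval_eq_sum_range' (by rwa [natDegree_taylor])]
  simp only [taylor_coeff]

theorem eval_add_sub_eval_sub_eq_two_mul_sum_range_odd {R : Type*} [CommRing R] {P : R[X]} {n : ℕ}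
    (hP : P.natDegree ≤ 2 * n) (x h : R) :
    P.eval (x + h) - P.eval (x - h)
      = 2 * ∑ k ∈ range n, (hasseDeriv (2 * k + 1) P).eval x * h ^ (2 * k + 1) := by
  rw [sub_eq_add_neg x, eval_add_eq_sum_range_hasseDeriv (Nat.lt_succ_of_le hP),
    eval_add_eq_sum_range_hasseDeriv (Nat.lt_succ_of_le hP), ← sum_sub_distrib, sum_range_succ,
    (even_two_mul n).neg_pow, sub_self, add_zero, sum_range_two_mul, mul_sum]
  refine sum_congr rfl fun k _ => ?_
  rw [(even_two_mul k).neg_pow, (Even.add_one (even_two_mul k)).neg_pow]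
  ring

theorem eval_hasseDeriv_eq_eval_iterate_derivative_div {K : Type*} [Field K] [CharZero K]
    (P : K[X]) (k : ℕ) (x : K) :
    (hasseDeriv k P).eval x = (derivative^[k] P).eval x / k.factorial := by
  rw [← factorial_smul_hasseDeriv, LinearMap.smul_apply, eval_smul, nsmul_eq_mul,
    mul_div_cancel_left₀ _ (Nat.cast_ne_zero.2 k.factorial_ne_zero)]

end Polynomial

/-- Eq. (6.16): for a polynomial of degree at most 6 the midpoint Taylor surrogate with
first, third and fifth derivatives is exactly consistent with the difference. -/
theorem polynomial_deg_le_six_midpoint_exact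
    (P : Polynomial ℝ) (hdeg : P.natDegree ≤ 6) (a b : ℝ) :
    Polynomial.eval b P - Polynomial.eval a P
      = (b - a) *
          (Polynomial.eval ((a + b) / 2) (Polynomial.derivative P)
            + Polynomial.eval ((a + b) / 2) ((⇑Polynomial.derivative)^[3] P) * (b - a) ^ 2 / 24
            + Polynomial.eval ((a + b) / 2) ((⇑Polynomial.derivative)^[5] P) * (b - a) ^ 4 / 1920) := by
  have hodd :=
    eval_add_sub_eval_sub_eq_two_mul_sum_range_odd (n := 3) hdeg ((a + b) / 2) ((b - a) / 2)
  rw [show (a + b) / 2 + (b - a) / 2 = b by ring,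
    show (a + b) / 2 - (b - a) / 2 = a by ring] at hodd
  simp only [sum_range_succ, sum_range_zero, eval_hasseDeriv_eq_eval_iterate_derivative_div] at hodd
  rw [hodd]
  norm_num [Nat.factorial]
  ring
end
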